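/- arXiv:2507.20384 — 12 statements merged into one kernel-verified Lean document; each statement's English description precedes it below -/
import Mathlib

section
/- For every n ∈ ℕ, there exists a unique real polynomial P(X) satisfying the polynomial identity I_q(P)(qX+1) − I_q(P)(X) = (q − 1)X^{n+1} + X^n (that is, ∫_X^{qX+1} P(t) d_q t = (q − 1)X^{n+1} + X^n identically in X). Moreover, this polynomial P has degree exactly n. -/
open Polynomial Finset

/-- The `q`-analogue `[x]_q = (q^x - 1)/(q - 1)` (real exponent, via `rpow`). -/
noncomputable def qnum (q x : ℝ) : ℝ := (q ^ x - 1) / (q - 1)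

/-- The `q`-antiderivative vanishing at `0` of a real polynomial:
`I_q(Σ a_k X^k) = Σ a_k X^(k+1) / [k+1]_q`. -/
noncomputable def Iq (q : ℝ) (P : Polynomial ℝ) : Polynomial ℝ :=
  P.sum fun k a =>
    Polynomial.C (a / ((q ^ (k + 1) - 1) / (q - 1))) * Polynomial.X ^ (k + 1)

namespace QAux

/-- The Jackson `q`-integral operator `T P = I_q(P)(qX+1) - I_q(P)(X)`. -/
noncomputable def T (q : ℝ) (P : ℝ[X]) : ℝ[X] :=
  (Iq q P).comp (C q * X + 1) - Iq q P

lemma Iq_coeff_succ (q : ℝ) (P : ℝ[X]) (m : ℕ) :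
    (Iq q P).coeff (m + 1) = P.coeff m / ((q ^ (m + 1) - 1) / (q - 1)) := by
  rw [Iq, Polynomial.sum_def, finset_sum_coeff]
  simp only [coeff_C_mul, coeff_X_pow, mul_ite, mul_one, mul_zero, add_left_inj]
  rw [Finset.sum_ite_eq P.support m
    (fun k => P.coeff k / ((q ^ (k + 1) - 1) / (q - 1)))]
  by_cases h : m ∈ P.support
  · simp [h]
  · simp [h, Polynomial.notMem_support_iff.1 h]

lemma Iq_coeff_zero (q : ℝ) (P : ℝ[X]) : (Iq q P).coeff 0 = 0 := by
  rw [Iq, Polynomial.sum_def, finset_sum_coeff]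
  simp

lemma Iq_zero (q : ℝ) : Iq q 0 = 0 := by
  rw [Iq]; exact Polynomial.sum_zero_index _

lemma T_zero (q : ℝ) : T q 0 = 0 := by
  simp [T, Iq_zero]

lemma Iq_sub (q : ℝ) (P Q : ℝ[X]) : Iq q (P - Q) = Iq q P - Iq q Q := by
  ext m
  cases m with
  | zero => simp [Iq_coeff_zero]
  | succ m => simp [Iq_coeff_succ, sub_div]

lemma Iq_add (q : ℝ) (P Q : ℝ[X]) : Iq q (P + Q) = Iq q P + Iq q Q := by
  ext m
  cases m with
  | zero => simp [Iq_coeff_zero]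
  | succ m => simp [Iq_coeff_succ, add_div]

lemma T_sub (q : ℝ) (P Q : ℝ[X]) : T q (P - Q) = T q P - T q Q := by
  simp only [T, Iq_sub, sub_comp]
  ring

lemma T_add (q : ℝ) (P Q : ℝ[X]) : T q (P + Q) = T q P + T q Q := by
  simp only [T, Iq_add, add_comp]
  ring

variable {q : ℝ} (hq : 0 < q) (hq1 : q ≠ 1)
include hq hq1

lemma pow_ne (k : ℕ) : q ^ (k + 1) ≠ 1 := by
  rcases lt_or_gt_of_ne hq1 with h | h
  · exact ne_of_lt (pow_lt_one₀ hq.le h (Nat.succ_ne_zero k))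
  · exact ne_of_gt (one_lt_pow₀ h (Nat.succ_ne_zero k))

lemma dne (k : ℕ) : (q ^ (k + 1) - 1) / (q - 1) ≠ 0 :=
  div_ne_zero (sub_ne_zero.2 (pow_ne hq hq1 k)) (sub_ne_zero.2 hq1)

omit hq hq1 in
lemma Iq_degree_le (P : ℝ[X]) : (Iq q P).degree ≤ (P.natDegree + 1 : ℕ) := by
  rw [degree_le_iff_coeff_zero]
  intro m hm
  cases m with
  | zero => exact Iq_coeff_zero q P
  | succ m =>
    rw [Iq_coeff_succ]
    have : P.natDegree < m := by exact_mod_cast Nat.lt_of_succ_lt_succ (by exact_mod_cast hm)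
    rw [Polynomial.coeff_eq_zero_of_natDegree_lt this, zero_div]

/-- Key degree computation: for `P ≠ 0`, `T q P` has degree `natDegree P + 1` with top
coefficient `(q-1) * leadingCoeff P`. -/
lemma T_degree (P : ℝ[X]) (hP : P ≠ 0) :
    (T q P).degree = (P.natDegree + 1 : ℕ) ∧
    (T q P).coeff (P.natDegree + 1) = (q - 1) * P.leadingCoeff := by
  set d := P.natDegree with hd
  set F := Iq q P with hF
  have hdk : (q ^ (d + 1) - 1) / (q - 1) ≠ 0 := dne hq hq1 d
  have hlc : P.leadingCoeff ≠ 0 := leadingCoeff_ne_zero.2 hP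
  have hFc : F.coeff (d + 1) = P.leadingCoeff / ((q ^ (d + 1) - 1) / (q - 1)) :=
    Iq_coeff_succ q P d
  have hFcne : F.coeff (d + 1) ≠ 0 := by
    rw [hFc]; exact div_ne_zero hlc hdk
  have hFdegle : F.degree ≤ (d + 1 : ℕ) := Iq_degree_le P
  have hFnd : F.natDegree = d + 1 := by
    refine le_antisymm (natDegree_le_iff_degree_le.2 hFdegle) (le_natDegree_of_ne_zero hFcne)
  have hFlc : F.leadingCoeff = P.leadingCoeff / ((q ^ (d + 1) - 1) / (q - 1)) := by
    rw [Polynomial.leadingCoeff, hFnd, hFc]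
  have hq0 : q ≠ 0 := ne_of_gt hq
  have hsnd : (C q * X + 1 : ℝ[X]).natDegree = 1 := by
    have := natDegree_linear (b := (1 : ℝ)) hq0
    simpa using this
  have hslc : (C q * X + 1 : ℝ[X]).leadingCoeff = q := by
    have := leadingCoeff_linear (b := (1 : ℝ)) hq0
    simpa using this
  have hcompnd : (F.comp (C q * X + 1)).natDegree = d + 1 := by
    rw [natDegree_comp, hsnd, hFnd, mul_one]
  have hcompc : (F.comp (C q * X + 1)).coeff (d + 1)
      = P.leadingCoeff / ((q ^ (d + 1) - 1) / (q - 1)) * q ^ (d + 1) := by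
    have := leadingCoeff_comp (p := F) (q := C q * X + 1) (by rw [hsnd]; exact one_ne_zero)
    rw [hslc, hFlc, hFnd] at this
    rw [← hcompnd] at this ⊢
    exact this
  have hTc : (T q P).coeff (d + 1) = (q - 1) * P.leadingCoeff := by
    rw [T, coeff_sub, hcompc, ← hF, hFc]
    have h1 : q ^ (d + 1) - 1 ≠ 0 := sub_ne_zero.2 (pow_ne hq hq1 d)
    have h2 : q - 1 ≠ 0 := sub_ne_zero.2 hq1
    field_simp
  refine ⟨?_, hTc⟩
  have hle : (T q P).degree ≤ (d + 1 : ℕ) := by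
    refine le_trans (degree_sub_le _ _) (max_le ?_ ?_)
    · exact le_trans degree_le_natDegree (by rw [hcompnd])
    · exact hFdegle
  have hge : ((d + 1 : ℕ) : WithBot ℕ) ≤ (T q P).degree := by
    apply le_degree_of_ne_zero
    rw [hTc]
    exact mul_ne_zero (sub_ne_zero.2 hq1) hlc
  exact le_antisymm hle hge

omit hq in
lemma T_eval (P : ℝ[X]) : (T q P).eval (-1 / (q - 1)) = 0 := by
  have h2 : q - 1 ≠ 0 := sub_ne_zero.2 hq1
  have hc : q * (-1 / (q - 1)) + 1 = -1 / (q - 1) := by field_simp; ring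
  simp [T, eval_comp, hc]

/-- Existence: every polynomial vanishing at the fixed point `-1/(q-1)` is in the range of `T`. -/
lemma exist (N : ℕ) : ∀ S : ℝ[X], S.natDegree ≤ N → S.eval (-1 / (q - 1)) = 0 →
    ∃ P : ℝ[X], T q P = S := by
  induction N with
  | zero =>
    intro S hdeg heval
    have : S = C (S.coeff 0) := eq_C_of_natDegree_eq_zero (Nat.le_zero.1 hdeg)
    rw [this] at heval ⊢
    simp at heval
    rw [heval]
    exact ⟨0, by simp [T_zero]⟩
  | succ N ih =>
    intro S hdeg heval
    by_cases hS : S = 0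
    · exact ⟨0, by simp [T_zero, hS]⟩
    by_cases hd0 : S.natDegree = 0
    · have : S = C (S.coeff 0) := eq_C_of_natDegree_eq_zero hd0
      rw [this] at heval
      simp at heval
      exact absurd (by rw [this, heval, map_zero]) hS
    -- main case : natDegree S = m' + 1
    obtain ⟨m', hm'⟩ : ∃ m', S.natDegree = m' + 1 :=
      ⟨S.natDegree - 1, (Nat.succ_pred_eq_of_pos (Nat.pos_of_ne_zero hd0)).symm⟩
    set a := S.leadingCoeff / (q - 1) with ha
    have hane : a ≠ 0 := div_ne_zero (leadingCoeff_ne_zero.2 hS) (sub_ne_zero.2 hq1)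
    set P0 : ℝ[X] := C a * X ^ m' with hP0
    have hP0ne : P0 ≠ 0 := by
      intro h
      have := congrArg (fun p => Polynomial.coeff p m') h
      simp [hP0, coeff_C_mul, coeff_X_pow] at this
      exact hane this
    have hP0nd : P0.natDegree = m' := natDegree_C_mul_X_pow m' a hane
    have hP0lc : P0.leadingCoeff = a := by
      rw [Polynomial.leadingCoeff, hP0nd, hP0]
      simp [coeff_C_mul, coeff_X_pow]
    obtain ⟨hTdeg, hTc⟩ := T_degree hq hq1 P0 hP0ne
    rw [hP0nd] at hTdeg hTc
    have hTnd : (T q P0).natDegree = m' + 1 := natDegree_eq_of_degree_eq_some hTdeg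
    have hTlc : (T q P0).leadingCoeff = S.leadingCoeff := by
      rw [Polynomial.leadingCoeff, hTnd, hTc, hP0lc, ha, mul_comm,
        div_mul_cancel₀ _ (sub_ne_zero.2 hq1)]
    have hSdeg : S.degree = (m' + 1 : ℕ) := by
      rw [degree_eq_natDegree hS, hm']
    have hlt : (S - T q P0).degree < S.degree :=
      degree_sub_lt (by rw [hSdeg, hTdeg]) hS hTlc.symm
    set S' := S - T q P0 with hS'
    have hS'eval : S'.eval (-1 / (q - 1)) = 0 := by
      rw [hS', eval_sub, heval, T_eval hq1, sub_zero]
    by_cases hS'0 : S' = 0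
    · exact ⟨P0, by rw [← sub_eq_zero]; rw [hS'] at hS'0; linear_combination (norm := ring_nf) - hS'0⟩
    · have hnd : S'.natDegree ≤ N := by
        have := natDegree_lt_natDegree hS'0 hlt
        omega
      obtain ⟨P', hP'⟩ := ih S' hnd hS'eval
      exact ⟨P0 + P', by rw [T_add, hP', hS']; ring⟩

end QAux

open QAux in
/-- For every `n`, there is a unique real polynomial `P` with
`∫_X^{qX+1} P(t) d_q t = (q-1)X^{n+1} + X^n` identically; moreover any such `P`
has degree exactly `n`. -/
theorem stmt_0 (q : ℝ) (hq : 0 < q) (hq1 : q ≠ 1) (n : ℕ) :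
    (∃! P : Polynomial ℝ,
      (Iq q P).comp (Polynomial.C q * Polynomial.X + 1) - Iq q P
        = Polynomial.C (q - 1) * Polynomial.X ^ (n + 1) + Polynomial.X ^ n) ∧
    (∀ P : Polynomial ℝ,
      (Iq q P).comp (Polynomial.C q * Polynomial.X + 1) - Iq q P
        = Polynomial.C (q - 1) * Polynomial.X ^ (n + 1) + Polynomial.X ^ n →
      P.degree = n) := by
  set R : ℝ[X] := C (q - 1) * X ^ (n + 1) + X ^ n with hR
  have h2 : q - 1 ≠ 0 := sub_ne_zero.2 hq1
  have hReval : R.eval (-1 / (q - 1)) = 0 := by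
    set c : ℝ := -1 / (q - 1) with hc
    have hcc : (q - 1) * c = -1 := by rw [hc]; field_simp
    have : R.eval c = (q - 1) * (c ^ n * c) + c ^ n := by
      simp [hR, pow_succ]
    rw [this]
    calc (q - 1) * (c ^ n * c) + c ^ n = ((q - 1) * c) * c ^ n + c ^ n := by ring
      _ = 0 := by rw [hcc]; ring
  have hRc : R.coeff (n + 1) = q - 1 := by
    rw [hR, coeff_add, coeff_C_mul, coeff_X_pow, coeff_X_pow]
    simp
  have hRne : R ≠ 0 := fun h => h2 (by rw [← hRc, h, coeff_zero])
  have hRdeg : R.degree = ((n + 1 : ℕ) : WithBot ℕ) := by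
    refine le_antisymm ?_ (le_degree_of_ne_zero (by rw [hRc]; exact h2))
    refine le_trans (degree_add_le _ _) (max_le ?_ ?_)
    · exact degree_C_mul_X_pow_le (n + 1) (q - 1)
    · rw [degree_X_pow]
      exact_mod_cast Nat.cast_le.2 (Nat.le_succ n)
  -- degree statement
  have hdegclaim : ∀ P : ℝ[X], T q P = R → P.degree = n := by
    intro P hP
    have hPne : P ≠ 0 := by
      intro h
      rw [h, T_zero] at hP
      exact hRne hP.symm
    have := (T_degree hq hq1 P hPne).1
    rw [hP, hRdeg] at this
    have hnat : P.natDegree + 1 = n + 1 := by exact_mod_cast this.symm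
    rw [degree_eq_natDegree hPne]
    exact_mod_cast Nat.succ_injective hnat
  obtain ⟨P, hP⟩ := exist hq hq1 R.natDegree R le_rfl hReval
  constructor
  · refine ⟨P, hP, ?_⟩
    intro y hy
    have hy' : T q y = R := hy
    by_contra hne
    have hsub : T q (y - P) = 0 := by rw [T_sub, hy', hP, sub_self]
    have hne0 : y - P ≠ 0 := sub_ne_zero.2 hne
    have := (T_degree hq hq1 (y - P) hne0).1
    rw [hsub, degree_zero] at this
    exact absurd this.symm (by exact_mod_cast WithBot.coe_ne_bot)
  · intro P' hP'
    exact hdegclaim P' hP'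
end

section
/- Let P(X) be a real polynomial such that the polynomial I_q(P)(qX+1) − I_q(P)(X) is identically zero (i.e., ∫_X^{qX+1} P(t) d_q t = 0 for all X). Then P is the zero polynomial. Equivalently, the linear map P ↦ (X ↦ ∫_X^{qX+1} P(t) d_q t) on real polynomials is injective. -/
open Polynomial Finset

lemma Iq_coeff_succ (q : ℝ) (P : Polynomial ℝ) (m : ℕ) :
    (Iq q P).coeff (m + 1) = P.coeff m / ((q ^ (m + 1) - 1) / (q - 1)) := by
  rw [Iq, Polynomial.sum, finset_sum_coeff]
  simp only [coeff_C_mul, coeff_X_pow]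
  rw [Finset.sum_eq_single m]
  · simp
  · intro b _ hb
    simp [Nat.succ_ne_succ.mpr (Ne.symm hb), Ne.symm hb]
  · intro h
    rw [Polynomial.notMem_support_iff.mp h]
    simp

lemma Iq_coeff_zero (q : ℝ) (P : Polynomial ℝ) : (Iq q P).coeff 0 = 0 := by
  rw [Iq, Polynomial.sum, finset_sum_coeff]
  apply Finset.sum_eq_zero
  intro k _
  simp [coeff_C_mul, coeff_X_pow]

lemma Iq_sub (q : ℝ) (P Q : Polynomial ℝ) : Iq q (P - Q) = Iq q P - Iq q Q := by
  ext n
  cases n with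
  | zero => simp [Iq_coeff_zero]
  | succ m => simp [Iq_coeff_succ, sub_div]

lemma qpow_ne_one {q : ℝ} (hq : 0 < q) (hq1 : q ≠ 1) {n : ℕ} (hn : n ≠ 0) :
    q ^ n ≠ 1 := by
  rcases lt_or_gt_of_ne hq1 with h | h
  · exact ne_of_lt (pow_lt_one₀ (le_of_lt hq) h hn)
  · exact ne_of_gt (one_lt_pow₀ h hn)

/-- If `∫_X^{qX+1} P(t) d_q t` is identically zero then `P = 0`; equivalently,
the linear map `P ↦ (X ↦ ∫_X^{qX+1} P(t) d_q t)` is injective. -/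
theorem stmt_1 (q : ℝ) (hq : 0 < q) (hq1 : q ≠ 1) :
    (∀ P : Polynomial ℝ,
      (Iq q P).comp (Polynomial.C q * Polynomial.X + 1) - Iq q P = 0 → P = 0) ∧
    Function.Injective
      (fun P : Polynomial ℝ =>
        (Iq q P).comp (Polynomial.C q * Polynomial.X + 1) - Iq q P) := by
  have hq0 : q ≠ 0 := ne_of_gt hq
  have key : ∀ P : Polynomial ℝ,
      (Iq q P).comp (Polynomial.C q * Polynomial.X + 1) - Iq q P = 0 → P = 0 := by
    intro P hP
    by_contra hP0
    set d := P.natDegree with hd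
    have hc : ((q ^ (d + 1) - 1) / (q - 1)) ≠ 0 := by
      apply div_ne_zero
      · exact sub_ne_zero_of_ne (qpow_ne_one hq hq1 (Nat.succ_ne_zero d))
      · exact sub_ne_zero_of_ne hq1
    have hcoeff : (Iq q P).coeff (d + 1) ≠ 0 := by
      rw [Iq_coeff_succ]
      exact div_ne_zero (Polynomial.leadingCoeff_ne_zero.mpr hP0) hc
    have hF0 : Iq q P ≠ 0 := fun h => hcoeff (by simp [h])
    have hn1 : d + 1 ≤ (Iq q P).natDegree := Polynomial.le_natDegree_of_ne_zero hcoeff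
    have hg : (Polynomial.C q * Polynomial.X + 1 : Polynomial ℝ).natDegree = 1 := by
      rw [show (1 : Polynomial ℝ) = Polynomial.C 1 from (Polynomial.C_1).symm]
      exact Polynomial.natDegree_linear hq0
    have hgl : (Polynomial.C q * Polynomial.X + 1 : Polynomial ℝ).leadingCoeff = q := by
      rw [Polynomial.leadingCoeff, hg]
      simp [Polynomial.coeff_one]
    have heq : (Iq q P).comp (Polynomial.C q * Polynomial.X + 1) = Iq q P :=
      sub_eq_zero.mp hP
    have hlc := Polynomial.leadingCoeff_comp (p := Iq q P)
      (q := Polynomial.C q * Polynomial.X + 1) (by rw [hg]; exact one_ne_zero)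
    rw [heq, hgl] at hlc
    have hlF : (Iq q P).leadingCoeff ≠ 0 := Polynomial.leadingCoeff_ne_zero.mpr hF0
    have : q ^ (Iq q P).natDegree = 1 := by
      apply mul_left_cancel₀ hlF
      rw [mul_one, ← hlc]
    exact qpow_ne_one hq hq1 (by omega) this
  refine ⟨key, ?_⟩
  intro P1 P2 h
  simp only at h
  have : (Iq q (P1 - P2)).comp (Polynomial.C q * Polynomial.X + 1) - Iq q (P1 - P2) = 0 := by
    rw [Iq_sub, Polynomial.sub_comp]
    linear_combination h
  have := key _ this
  exact sub_eq_zero.mp this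
end

section
/- For every n ∈ ℕ, the linear map φ_n sending a real polynomial P of degree at most n to the polynomial Q(X) = I_q(P)(qX+1) − I_q(P)(X) is a bijection from the space of real polynomials of degree at most n onto the space E_n := { Q ∈ ℝ[X] : deg Q ≤ n+1 and Q(1/(1−q)) = 0 }. -/
open Polynomial Finset

lemma qpow_sub_one_ne (q : ℝ) (hq : 0 < q) (hq1 : q ≠ 1) {m : ℕ} (hm : 0 < m) :
    q ^ m - 1 ≠ 0 := by
  rcases lt_or_gt_of_ne hq1 with h | h
  · exact sub_ne_zero.mpr (ne_of_lt (pow_lt_one₀ hq.le h hm.ne'))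
  · exact sub_ne_zero.mpr (ne_of_gt (one_lt_pow₀ h hm.ne'))

lemma qd_ne (q : ℝ) (hq : 0 < q) (hq1 : q ≠ 1) {m : ℕ} (hm : 0 < m) :
    (q ^ m - 1) / (q - 1) ≠ 0 :=
  div_ne_zero (qpow_sub_one_ne q hq hq1 hm) (sub_ne_zero.mpr hq1)

lemma Iq_coeff (q : ℝ) (P : Polynomial ℝ) (m : ℕ) :
    (Iq q P).coeff m =
      if m = 0 then 0 else P.coeff (m - 1) / ((q ^ m - 1) / (q - 1)) := by
  rw [Iq, Polynomial.coeff_sum]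
  simp only [coeff_C_mul, coeff_X_pow, mul_ite, mul_one, mul_zero]
  rcases m with _ | j
  · simp [Polynomial.sum]
  · simp only [Nat.succ_ne_zero, if_false, Nat.succ_sub_one]
    rw [Polynomial.sum]
    rw [Finset.sum_eq_single j]
    · simp
    · intro b _ hb; simp [hb.symm]
    · intro hj; simp [Polynomial.notMem_support_iff.mp hj]

lemma comp_CqX_coeff (q : ℝ) (S : Polynomial ℝ) (m : ℕ) :
    (S.comp (Polynomial.C q * Polynomial.X)).coeff m = S.coeff m * q ^ m := by
  rw [Polynomial.comp_eq_sum_left, Polynomial.coeff_sum]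
  simp only [mul_pow, ← Polynomial.C_pow, ← mul_assoc, ← Polynomial.C_mul, coeff_C_mul,
    coeff_X_pow, mul_ite, mul_one, mul_zero]
  rw [Polynomial.sum, Finset.sum_eq_single m]
  · simp [mul_comm]
  · intro b _ hb; simp [Ne.symm hb]
  · intro hm; simp [Polynomial.notMem_support_iff.mp hm]

lemma coeff_range_sum (f : ℕ → ℝ) (N j : ℕ) :
    (∑ m ∈ Finset.range N, Polynomial.C (f m) * Polynomial.X ^ m).coeff j =
      if j < N then f j else 0 := by
  rw [Polynomial.finset_sum_coeff]
  simp only [coeff_C_mul, coeff_X_pow, mul_ite, mul_one, mul_zero]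
  rw [Finset.sum_ite_eq (Finset.range N) j f]
  simp [Finset.mem_range]

lemma eq_C_of_comp_CqX (q : ℝ) (hq : 0 < q) (hq1 : q ≠ 1) (S : Polynomial ℝ)
    (h : S.comp (Polynomial.C q * Polynomial.X) = S) : S = Polynomial.C (S.coeff 0) := by
  ext m
  rcases Nat.eq_zero_or_pos m with rfl | hm
  · simp
  · have h1 : S.coeff m * q ^ m = S.coeff m := by
      rw [← comp_CqX_coeff q S m, h]
    have h2 : S.coeff m * (q ^ m - 1) = 0 := by ring_nf; linarith [h1]
    rcases mul_eq_zero.mp h2 with h3 | h3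
    · simp [h3, Polynomial.coeff_C, hm.ne']
    · exact absurd h3 (qpow_sub_one_ne q hq hq1 hm)

/-- The map `φ_n : P ↦ I_q(P)(qX+1) − I_q(P)(X)` is a bijection from the
polynomials of degree at most `n` onto
`E_n = {Q : deg Q ≤ n+1 and Q(1/(1-q)) = 0}`. -/
theorem stmt_2 (q : ℝ) (hq : 0 < q) (hq1 : q ≠ 1) (n : ℕ) :
    Set.BijOn
      (fun P : Polynomial ℝ =>
        (Iq q P).comp (Polynomial.C q * Polynomial.X + 1) - Iq q P)
      {P : Polynomial ℝ | P.degree ≤ (n : ℕ)}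
      {Q : Polynomial ℝ | Q.degree ≤ ((n + 1 : ℕ) : ℕ) ∧ Q.eval (1 / (1 - q)) = 0} := by
  have h1q : (1 : ℝ) - q ≠ 0 := sub_ne_zero.mpr (Ne.symm hq1)
  set cc : ℝ := 1 / (1 - q) with hccdef
  have hc : q * cc + 1 = cc := by
    rw [hccdef]; field_simp; ring
  -- composition identities for linear polynomials
  have e1 : (Polynomial.X + Polynomial.C cc).comp (Polynomial.C q * Polynomial.X)
      = Polynomial.C q * Polynomial.X + Polynomial.C cc := by
    apply Polynomial.funext; intro x; simp [Polynomial.eval_comp]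
  have e2 : (Polynomial.C q * Polynomial.X + 1).comp (Polynomial.X + Polynomial.C cc)
      = Polynomial.C q * Polynomial.X + Polynomial.C cc := by
    apply Polynomial.funext; intro x
    simp only [Polynomial.eval_comp, Polynomial.eval_add, Polynomial.eval_mul,
      Polynomial.eval_C, Polynomial.eval_X, Polynomial.eval_one]
    linear_combination hc
  have eX : (Polynomial.X + Polynomial.C cc).comp (Polynomial.X - Polynomial.C cc)
      = Polynomial.X := by
    apply Polynomial.funext; intro x; simp [Polynomial.eval_comp]
  have e3 : (Polynomial.X - Polynomial.C cc).comp (Polynomial.C q * Polynomial.X + 1)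
      = (Polynomial.C q * Polynomial.X).comp (Polynomial.X - Polynomial.C cc) := by
    apply Polynomial.funext; intro x
    simp only [Polynomial.eval_comp, Polynomial.eval_sub, Polynomial.eval_add,
      Polynomial.eval_mul, Polynomial.eval_C, Polynomial.eval_X, Polynomial.eval_one]
    linear_combination hc
  -- degree of Iq
  have IqDeg : ∀ P : Polynomial ℝ, P.natDegree ≤ n → (Iq q P).natDegree ≤ n + 1 := by
    intro P hP
    rw [Polynomial.natDegree_le_iff_coeff_eq_zero]
    intro m hm
    rw [Iq_coeff]
    have hm0 : m ≠ 0 := by omega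
    rw [if_neg hm0]
    have : P.coeff (m - 1) = 0 :=
      Polynomial.coeff_eq_zero_of_natDegree_lt (by omega)
    simp [this]
  have Iq_coeff_zero : ∀ P : Polynomial ℝ, (Iq q P).coeff 0 = 0 := by
    intro P; simp [Iq_coeff]
  have heval : ∀ P : Polynomial ℝ, ((Iq q P).comp (Polynomial.C q * Polynomial.X + 1)
      - Iq q P).eval cc = 0 := by
    intro P
    simp [Polynomial.eval_comp, hc]
  have hdegl : (Polynomial.C q * Polynomial.X + 1).natDegree = 1 := by
    rw [show (1 : Polynomial ℝ) = Polynomial.C 1 from (Polynomial.C_1).symm]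
    exact Polynomial.natDegree_linear hq.ne'
  constructor
  · -- MapsTo
    intro P hP
    simp only [Set.mem_setOf_eq] at hP ⊢
    have hPn : P.natDegree ≤ n := Polynomial.natDegree_le_iff_degree_le.mpr hP
    have h1 : (Iq q P).natDegree ≤ n + 1 := IqDeg P hPn
    refine ⟨?_, heval P⟩
    rw [← Polynomial.natDegree_le_iff_degree_le]
    refine le_trans (Polynomial.natDegree_sub_le _ _) ?_
    rw [max_le_iff]
    refine ⟨?_, h1⟩
    rw [Polynomial.natDegree_comp, hdegl, mul_one]
    exact h1
  constructor
  · -- InjOn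
    intro P₁ hP₁ P₂ hP₂ h
    simp only at h
    set R : Polynomial ℝ := Iq q P₁ - Iq q P₂ with hRdef
    have hR : R.comp (Polynomial.C q * Polynomial.X + 1) = R := by
      rw [hRdef, Polynomial.sub_comp]
      linear_combination h
    set S : Polynomial ℝ := R.comp (Polynomial.X + Polynomial.C cc) with hSdef
    have hS : S.comp (Polynomial.C q * Polynomial.X) = S := by
      rw [hSdef, Polynomial.comp_assoc, e1, ← e2, ← Polynomial.comp_assoc, hR]
    have hSC := eq_C_of_comp_CqX q hq hq1 S hS
    have hRC : R = Polynomial.C (S.coeff 0) := by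
      have hcm : S.comp (Polynomial.X - Polynomial.C cc) = R := by
        rw [hSdef, Polynomial.comp_assoc, eX, Polynomial.comp_X]
      rw [← hcm]
      conv_lhs => rw [hSC]
      rw [Polynomial.C_comp]
    have hR0 : R.coeff 0 = 0 := by
      rw [hRdef, Polynomial.coeff_sub, Iq_coeff_zero, Iq_coeff_zero, sub_self]
    have hRz : R = 0 := by
      rw [hRC] at hR0 ⊢
      have hs0 : S.coeff 0 = 0 := by simpa using hR0
      simp [hs0]
    have hIq : Iq q P₁ = Iq q P₂ := sub_eq_zero.mp (hRdef ▸ hRz)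
    ext k
    have h1 := Iq_coeff q P₁ (k + 1)
    have h2 := Iq_coeff q P₂ (k + 1)
    rw [hIq, h2] at h1
    simp only [Nat.succ_ne_zero, if_false, Nat.add_sub_cancel] at h1
    have hd := qd_ne q hq hq1 (Nat.succ_pos k)
    rw [div_eq_div_iff hd hd] at h1
    exact (mul_right_cancel₀ hd h1).symm
  · -- SurjOn
    intro Q hQ
    simp only [Set.mem_setOf_eq] at hQ
    obtain ⟨hQdeg, hQeval⟩ := hQ
    have hQn : Q.natDegree ≤ n + 1 := Polynomial.natDegree_le_iff_degree_le.mpr hQdeg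
    set G : Polynomial ℝ := Q.comp (Polynomial.X + Polynomial.C cc) with hGdef
    have hGn : G.natDegree ≤ n + 1 := by
      rw [hGdef, Polynomial.natDegree_comp, Polynomial.natDegree_X_add_C, mul_one]
      exact hQn
    have hG0 : G.coeff 0 = 0 := by
      rw [hGdef, Polynomial.coeff_zero_eq_eval_zero, Polynomial.eval_comp]
      simpa using hQeval
    set F : Polynomial ℝ := ∑ m ∈ Finset.range (n + 2),
      Polynomial.C (G.coeff m / (q ^ m - 1)) * Polynomial.X ^ m with hFdef
    have hFcoeff : ∀ j, F.coeff j = if j < n + 2 then G.coeff j / (q ^ j - 1) else 0 := by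
      intro j; rw [hFdef]; exact coeff_range_sum _ _ j
    have hFG : F.comp (Polynomial.C q * Polynomial.X) - F = G := by
      ext m
      rw [Polynomial.coeff_sub, comp_CqX_coeff, hFcoeff]
      rcases Nat.eq_zero_or_pos m with rfl | hm
      · simp [hG0]
      · by_cases hm2 : m < n + 2
        · rw [if_pos hm2]
          have hne := qpow_sub_one_ne q hq hq1 hm
          rw [div_mul_eq_mul_div, ← sub_div,
            show G.coeff m * q ^ m - G.coeff m = G.coeff m * (q ^ m - 1) by ring,
            mul_div_assoc, div_self hne, mul_one]
        · rw [if_neg hm2]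
          have : G.coeff m = 0 := Polynomial.coeff_eq_zero_of_natDegree_lt (by omega)
          simp [this]
    have hFn : F.natDegree ≤ n + 1 := by
      rw [Polynomial.natDegree_le_iff_coeff_eq_zero]
      intro m hm
      rw [hFcoeff]
      by_cases hm2 : m < n + 2
      · have h : G.coeff m = 0 := Polynomial.coeff_eq_zero_of_natDegree_lt (by omega)
        simp [h]
      · rw [if_neg hm2]
    set H : Polynomial ℝ := F.comp (Polynomial.X - Polynomial.C cc) with hHdef
    have hHn : H.natDegree ≤ n + 1 := by
      rw [hHdef, Polynomial.natDegree_comp, Polynomial.natDegree_X_sub_C, mul_one]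
      exact hFn
    have e4 : H.comp (Polynomial.C q * Polynomial.X + 1) - H = Q := by
      rw [hHdef, Polynomial.comp_assoc, e3, ← Polynomial.comp_assoc,
        ← Polynomial.sub_comp, hFG, hGdef, Polynomial.comp_assoc, eX, Polynomial.comp_X]
    set P : Polynomial ℝ := ∑ k ∈ Finset.range (n + 1),
      Polynomial.C (H.coeff (k + 1) * ((q ^ (k + 1) - 1) / (q - 1))) * Polynomial.X ^ k
      with hPdef
    have hPcoeff : ∀ j, P.coeff j =
        if j < n + 1 then H.coeff (j + 1) * ((q ^ (j + 1) - 1) / (q - 1)) else 0 := by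
      intro j; rw [hPdef]; exact coeff_range_sum _ _ j
    have hPmem : P ∈ {P : Polynomial ℝ | P.degree ≤ (n : ℕ)} := by
      simp only [Set.mem_setOf_eq]
      rw [← Polynomial.natDegree_le_iff_degree_le,
        Polynomial.natDegree_le_iff_coeff_eq_zero]
      intro m hm
      rw [hPcoeff, if_neg (by omega)]
    have hIqP : Iq q P = H - Polynomial.C (H.coeff 0) := by
      ext m
      rw [Iq_coeff, Polynomial.coeff_sub, Polynomial.coeff_C]
      rcases Nat.eq_zero_or_pos m with rfl | hm
      · simp
      · obtain ⟨k, rfl⟩ : ∃ k, m = k + 1 := ⟨m - 1, by omega⟩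
        rw [if_neg (Nat.succ_ne_zero k), if_neg (Nat.succ_ne_zero k),
          Nat.add_sub_cancel, hPcoeff]
        by_cases hk : k < n + 1
        · rw [if_pos hk, mul_div_cancel_right₀ _ (qd_ne q hq hq1 (Nat.succ_pos k)),
            sub_zero]
        · rw [if_neg hk, zero_div, sub_zero]
          exact (Polynomial.coeff_eq_zero_of_natDegree_lt (by omega)).symm
    refine ⟨P, hPmem, ?_⟩
    simp only
    rw [hIqP, Polynomial.sub_comp, Polynomial.C_comp]
    linear_combination e4
end

section
/- For all positive integers n and N, one has Σ_{k=0}^{N−1} q^k [k]_q^{n−1} = (η_{n,q}(N) − η_{n,q})/n, where η_{n,q}(N) is the value of Carlitz's q-polynomial η_{n,q} at X = N and η_{n,q} = η_{n,q}(0). -/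
open Polynomial Finset

/-- Carlitz's `q`-polynomial
`η_{n,q}(x) = (q-1)^{-n} Σ_{k=0}^n (-1)^{n-k} C(n,k) (k/[k]_q) q^{kx}`,
with the convention `k/[k]_q = 1` for `k = 0`. -/
noncomputable def carlitzEta (q : ℝ) (n : ℕ) (x : ℝ) : ℝ :=
  ((q - 1) ^ n)⁻¹ * ∑ k ∈ Finset.range (n + 1),
    (-1 : ℝ) ^ (n - k) * (n.choose k : ℝ) *
      (if k = 0 then 1 else (k : ℝ) / qnum q (k : ℝ)) * q ^ ((k : ℝ) * x)

lemma pow_succ_sub_one_ne (q : ℝ) (hq : 0 < q) (hq1 : q ≠ 1) (i : ℕ) :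
    q ^ (i+1) - 1 ≠ 0 := by
  refine sub_ne_zero.mpr ?_
  rcases lt_or_gt_of_ne hq1 with h | h
  · exact ne_of_lt (pow_lt_one₀ hq.le h (Nat.succ_ne_zero i))
  · exact ne_of_gt (one_lt_pow₀ h (Nat.succ_ne_zero i))

lemma carlitz_step (q : ℝ) (hq : 0 < q) (hq1 : q ≠ 1) (m k : ℕ) :
    carlitzEta q (m+1) ((k:ℝ)+1) - carlitzEta q (m+1) (k:ℝ)
      = ((m:ℝ)+1) * (q ^ k * qnum q (k:ℝ) ^ m) := by
  have hd : q - 1 ≠ 0 := sub_ne_zero.mpr hq1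
  have hrw : ∀ i j : ℕ, q ^ ((i:ℝ) * (j:ℝ)) = q ^ (i*j) := fun i j => by
    rw [← Nat.cast_mul, Real.rpow_natCast]
  have h1 : ((k:ℝ)+1) = ((k+1:ℕ):ℝ) := by push_cast; ring
  have hqn : ∀ i : ℕ, qnum q (i:ℝ) = (q ^ i - 1)/(q - 1) := fun i => by
    rw [qnum, Real.rpow_natCast]
  rw [h1, carlitzEta, carlitzEta, ← mul_sub, ← Finset.sum_sub_distrib]
  simp only [hrw, hqn]
  rw [Finset.sum_range_succ']
  simp only [Nat.zero_mul, pow_zero, Nat.succ_sub_succ, sub_self, ite_true, add_zero,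
    Nat.succ_ne_zero, if_false]
  -- expand RHS binomially
  have hbin : (q^k - 1)^m
      = ∑ i ∈ Finset.range (m+1), (q^k)^i * (-1:ℝ)^(m-i) * (m.choose i : ℝ) := by
    rw [sub_eq_add_neg]
    simpa [neg_one_pow_eq_pow_mod_two] using add_pow (q^k) (-1:ℝ) m
  rw [div_pow, hbin, inv_mul_eq_div, div_eq_iff (pow_ne_zero _ hd), Finset.sum_div,
    Finset.mul_sum, Finset.mul_sum, Finset.sum_mul]
  refine Finset.sum_congr rfl fun i _ => ?_
  have hP := pow_succ_sub_one_ne q hq hq1 i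
  have hchoose : ((m+1).choose (i+1) : ℝ) * ((i:ℝ)+1) = ((m:ℝ)+1) * (m.choose i : ℝ) := by
    exact_mod_cast (Nat.add_one_mul_choose_eq m i).symm
  have e1 : q^((i+1)*(k+1)) = (q^k)^i * q^k * q^(i+1) := by
    rw [show (i+1)*(k+1) = k*i + k + (i+1) from by ring, pow_add, pow_add, pow_mul]
  have e2 : q^((i+1)*k) = (q^k)^i * q^k := by
    rw [show (i+1)*k = k*i + k from by ring, pow_add, pow_mul]
  rw [e1, e2]
  push_cast
  field_simp
  linear_combination ((q-1)^(m+1)) * hchoose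


/-- For positive integers `n, N`:
`Σ_{k=0}^{N-1} q^k [k]_q^{n-1} = (η_{n,q}(N) − η_{n,q})/n`. -/
theorem stmt_3 (q : ℝ) (hq : 0 < q) (hq1 : q ≠ 1) (n N : ℕ)
    (hn : 0 < n) (hN : 0 < N) :
    ∑ k ∈ Finset.range N, q ^ k * qnum q (k : ℝ) ^ (n - 1)
      = (carlitzEta q n (N : ℝ) - carlitzEta q n 0) / (n : ℝ) := by
  obtain ⟨m, rfl⟩ : ∃ m, n = m + 1 := ⟨n - 1, (Nat.succ_pred_eq_of_pos hn).symm⟩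
  have hn' : ((m:ℝ)+1) ≠ 0 := by positivity
  rw [eq_div_iff (by push_cast; exact hn')]
  calc (∑ k ∈ Finset.range N, q ^ k * qnum q (k:ℝ) ^ (m+1-1)) * ((m+1:ℕ):ℝ)
      = ∑ k ∈ Finset.range N,
          (carlitzEta q (m+1) ((k+1:ℕ):ℝ) - carlitzEta q (m+1) (k:ℝ)) := by
        rw [Finset.sum_mul]
        refine Finset.sum_congr rfl fun k _ => ?_
        rw [show ((k+1:ℕ):ℝ) = (k:ℝ)+1 from by push_cast; ring,
          carlitz_step q hq hq1 m k]
        push_cast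
        ring
    _ = carlitzEta q (m+1) (N:ℝ) - carlitzEta q (m+1) ((0:ℕ):ℝ) :=
        Finset.sum_range_sub (fun k => carlitzEta q (m+1) (k:ℝ)) N
    _ = carlitzEta q (m+1) (N:ℝ) - carlitzEta q (m+1) 0 := by norm_num
end

section
/- For every positive integer n, the real function X ↦ η_{n,q}(X) is differentiable on ℝ and its derivative satisfies η_{n,q}′(X) = n · (log q)/(q − 1) · q^X · β_{n−1,q}(X) for all real X. -/
open Polynomial Finset

/-- Carlitz's `q`-polynomial
`β_{n,q}(x) = (q-1)^{-n} Σ_{k=0}^n (-1)^{n-k} C(n,k) ((k+1)/[k+1]_q) q^{kx}`. -/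
noncomputable def carlitzBeta (q : ℝ) (n : ℕ) (x : ℝ) : ℝ :=
  ((q - 1) ^ n)⁻¹ * ∑ k ∈ Finset.range (n + 1),
    (-1 : ℝ) ^ (n - k) * (n.choose k : ℝ) *
      (((k : ℝ) + 1) / qnum q ((k : ℝ) + 1)) * q ^ ((k : ℝ) * x)

/-- For `n ≥ 1`, `η_{n,q}` is differentiable on `ℝ` with
`η_{n,q}′(X) = n ⋅ (log q)/(q−1) ⋅ q^X ⋅ β_{n−1,q}(X)`. -/
theorem stmt_4 (q : ℝ) (hq : 0 < q) (hq1 : q ≠ 1) (n : ℕ) (hn : 0 < n) (X : ℝ) :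
    HasDerivAt (fun x : ℝ => carlitzEta q n x)
      ((n : ℝ) * (Real.log q / (q - 1)) * q ^ X * carlitzBeta q (n - 1) X) X := by
  obtain ⟨m, rfl⟩ := Nat.exists_eq_succ_of_ne_zero hn.ne'
  have key : ∀ k : ℕ, HasDerivAt (fun x : ℝ => q ^ ((k:ℝ) * x))
      ((k:ℝ) * Real.log q * q ^ ((k:ℝ) * X)) X := by
    intro k
    have h1 : HasDerivAt (fun y : ℝ => q ^ y) (q ^ ((k:ℝ)*X) * Real.log q) ((k:ℝ)*X) :=
      (Real.hasStrictDerivAt_const_rpow hq _).hasDerivAt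
    have h2 : HasDerivAt (fun x : ℝ => (k:ℝ) * x) (k:ℝ) X := by
      simpa using (hasDerivAt_id X).const_mul (k:ℝ)
    have := h1.comp X h2
    exact this.congr_deriv (by ring)
  have hsum : HasDerivAt (fun x => carlitzEta q (m+1) x)
      (((q-1)^(m+1))⁻¹ * ∑ k ∈ Finset.range (m+2),
        (-1:ℝ)^(m+1-k) * ((m+1).choose k : ℝ) *
          (if k = 0 then 1 else (k:ℝ)/ qnum q k) * ((k:ℝ) * Real.log q * q ^ ((k:ℝ)*X))) X := by
    unfold carlitzEta
    exact (HasDerivAt.fun_sum (fun k _ => ((key k).const_mul _))).const_mul _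
  convert hsum using 1
  rw [Finset.sum_range_succ']
  simp only [Nat.cast_zero, zero_mul, Real.rpow_zero, mul_zero, add_zero, Nat.succ_sub_one]
  unfold carlitzBeta
  rw [Finset.mul_sum, Finset.mul_sum, Finset.mul_sum]
  refine Finset.sum_congr rfl fun i hi => ?_
  simp only [Finset.mem_range] at hi
  have hsub : m + 1 - (i + 1) = m - i := by omega
  have hch : ((m+1).choose (i+1) : ℝ) * ((i:ℝ)+1) = ((m:ℝ)+1) * (m.choose i : ℝ) := by
    have h := Nat.add_one_mul_choose_eq m i
    have h2 : ((m+1) * m.choose i : ℝ) = ((m+1).choose (i+1) : ℝ) * ((i+1 : ℕ) : ℝ) := by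
      exact_mod_cast congrArg (Nat.cast : ℕ → ℝ) h
    push_cast at h2
    linarith
  have hrpow : q ^ (((i:ℝ)+1) * X) = q ^ ((i:ℝ)*X) * q ^ X := by
    rw [← Real.rpow_add hq]; ring_nf
  have hq1' : q - 1 ≠ 0 := sub_ne_zero.mpr hq1
  have hpm : ((q-1)^(m+1))⁻¹ = ((q-1)^m)⁻¹ * (q-1)⁻¹ := by
    rw [pow_succ, mul_inv]
  simp only [if_neg (Nat.succ_ne_zero i), hsub, hpm]
  have hA : qnum q ((i:ℝ)+1) ≠ 0 := by
    have hpow : q ^ ((i:ℝ)+1) ≠ 1 := by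
      intro h
      have : ((i:ℝ)+1) * Real.log q = 0 := by
        have := congrArg Real.log h
        rwa [Real.log_rpow hq, Real.log_one] at this
      rcases mul_eq_zero.mp this with h' | h'
      · nlinarith [Nat.cast_nonneg (α := ℝ) i]
      · rcases Real.log_eq_zero.mp h' with h'' | h'' | h''
        · exact absurd h'' hq.ne'
        · exact hq1 h''
        · nlinarith
    unfold qnum
    exact div_ne_zero (sub_ne_zero.mpr hpow) hq1'
  push_cast
  rw [hrpow]
  linear_combination (-((-1:ℝ)^(m-i) * Real.log q * (q-1)⁻¹ * ((q-1)^m)⁻¹ * q^X * q^((i:ℝ)*X) * (((i:ℝ)+1)/qnum q ((i:ℝ)+1)))) * hch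
end

section
/- For every n ∈ ℕ and every integer k ≥ 0, one has F_{n,q}([k+1]_q) − F_{n,q}([k]_q) = q^k [k]_q^n; that is, ∫_{[k]_q}^{[k+1]_q} B_{n,q}(t) d_q t = q^k [k]_q^n. -/
open Polynomial Finset

/-- `F_{n,q}([k+1]_q) − F_{n,q}([k]_q) = q^k [k]_q^n` for every integer `k ≥ 0`. -/
theorem stmt_6 (q : ℝ) (hq : 0 < q) (hq1 : q ≠ 1) (n : ℕ) (B : Polynomial ℝ)
    (hB : (Iq q B).comp (Polynomial.C q * Polynomial.X + 1) - Iq q B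
      = Polynomial.C (q - 1) * Polynomial.X ^ (n + 1) + Polynomial.X ^ n)
    (k : ℕ) :
    (Iq q B).eval (qnum q ((k : ℝ) + 1)) - (Iq q B).eval (qnum q (k : ℝ))
      = q ^ k * qnum q (k : ℝ) ^ n := by
  have hq1' : q - 1 ≠ 0 := sub_ne_zero.mpr hq1
  have hrp : ∀ m : ℕ, q ^ (m : ℝ) = q ^ m := fun m => Real.rpow_natCast q m
  have hx : qnum q ((k : ℝ) + 1) = q * qnum q (k : ℝ) + 1 := by
    simp only [qnum, Real.rpow_add hq, Real.rpow_one, hrp]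
    field_simp
    ring
  have hpow : q ^ k = (q - 1) * qnum q (k : ℝ) + 1 := by
    simp only [qnum, hrp]
    field_simp
    ring
  have h := congrArg (Polynomial.eval (qnum q (k : ℝ))) hB
  simp only [Polynomial.eval_sub, Polynomial.eval_comp, Polynomial.eval_add,
    Polynomial.eval_mul, Polynomial.eval_C, Polynomial.eval_X, Polynomial.eval_one,
    Polynomial.eval_pow] at h
  rw [hx, h, hpow]
  ring
end

section
/- For every n ∈ ℕ and every positive integer N, one has F_{n,q}([N]_q) = Σ_{k=0}^{N−1} q^k [k]_q^n. -/
open Polynomial Finset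

lemma Iq_eval_zero (q : ℝ) (B : Polynomial ℝ) : (Iq q B).eval 0 = 0 := by
  unfold Iq
  rw [Polynomial.eval_sum]
  simp [Polynomial.sum]

/-- `F_{n,q}([N]_q) = Σ_{k=0}^{N-1} q^k [k]_q^n` for every positive integer `N`. -/
theorem stmt_7 (q : ℝ) (hq : 0 < q) (hq1 : q ≠ 1) (n : ℕ) (B : Polynomial ℝ)
    (hB : (Iq q B).comp (Polynomial.C q * Polynomial.X + 1) - Iq q B
      = Polynomial.C (q - 1) * Polynomial.X ^ (n + 1) + Polynomial.X ^ n)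
    (N : ℕ) (hN : 0 < N) :
    (Iq q B).eval (qnum q (N : ℝ))
      = ∑ k ∈ Finset.range N, q ^ k * qnum q (k : ℝ) ^ n := by
  have hq1' : q - 1 ≠ 0 := sub_ne_zero.mpr hq1
  have key : ∀ x : ℝ, (Iq q B).eval (q * x + 1) - (Iq q B).eval x
      = (q - 1) * x ^ (n + 1) + x ^ n := by
    intro x
    have h := congrArg (Polynomial.eval x) hB
    simpa using h
  have hqn : ∀ k : ℕ, qnum q (k : ℝ) = (q ^ k - 1) / (q - 1) := by
    intro k; unfold qnum; rw [Real.rpow_natCast]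
  have hstep : ∀ k : ℕ, q * qnum q (k : ℝ) + 1 = qnum q ((k + 1 : ℕ) : ℝ) := by
    intro k; rw [hqn, hqn]; push_cast; field_simp; ring
  have main : ∀ M : ℕ, (Iq q B).eval (qnum q (M : ℝ))
      = ∑ k ∈ Finset.range M, q ^ k * qnum q (k : ℝ) ^ n := by
    intro M
    induction M with
    | zero =>
      have h0 : qnum q (0 : ℝ) = 0 := by
        unfold qnum; simp
      simp [h0, Iq_eval_zero]
    | succ m ih =>
      rw [Finset.sum_range_succ, ← ih, ← hstep m]
      have h1 := key (qnum q (m : ℝ))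
      have hqk : q ^ m = (q - 1) * qnum q (m : ℝ) + 1 := by
        rw [hqn]; field_simp; ring
      rw [hqk]
      have h2 : ((q - 1) * qnum q (m : ℝ) + 1) * qnum q (m : ℝ) ^ n
          = (q - 1) * qnum q (m : ℝ) ^ (n + 1) + qnum q (m : ℝ) ^ n := by ring
      linarith
  exact main N
end

section
/- For every n ∈ ℕ and every real number X, one has F_{n,q}([X]_q) = (η_{n+1,q}(X) − η_{n+1,q})/(n + 1), where [X]_q = (q^X − 1)/(q − 1). -/
open Polynomial Finset

lemma comp_CmulX_coeff (p : Polynomial ℝ) (a : ℝ) (k : ℕ) :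
    (p.comp (C a * X)).coeff k = p.coeff k * a ^ k := by
  induction p using Polynomial.induction_on' with
  | add p q hp hq => simp [add_comp, hp, hq, add_mul]
  | monomial m b =>
    rw [Polynomial.monomial_comp, mul_pow, ← C_pow, ← mul_assoc, ← C_mul, C_mul_X_pow_eq_monomial,
      Polynomial.coeff_monomial, Polynomial.coeff_monomial]
    by_cases h : m = k
    · subst h; simp
    · simp [h]


/-- `F_{n,q}([X]_q) = (η_{n+1,q}(X) − η_{n+1,q})/(n+1)` for all real `X`. -/
theorem stmt_8 (q : ℝ) (hq : 0 < q) (hq1 : q ≠ 1) (n : ℕ) (B : Polynomial ℝ)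
    (hB : (Iq q B).comp (Polynomial.C q * Polynomial.X + 1) - Iq q B
      = Polynomial.C (q - 1) * Polynomial.X ^ (n + 1) + Polynomial.X ^ n)
    (x : ℝ) :
    (Iq q B).eval (qnum q x)
      = (carlitzEta q (n + 1) x - carlitzEta q (n + 1) 0) / ((n : ℝ) + 1) := by
  have hq' : q - 1 ≠ 0 := sub_ne_zero.mpr hq1
  have hn1 : ((n : ℝ) + 1) ≠ 0 := by positivity
  have hpowne : ∀ k : ℕ, q ^ (k + 1) ≠ (1 : ℝ) := by
    intro k
    rcases lt_trichotomy q 1 with h | h | h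
    · exact ne_of_lt (pow_lt_one₀ hq.le h (Nat.succ_ne_zero k))
    · exact absurd h hq1
    · exact ne_of_gt (one_lt_pow₀ h (Nat.succ_ne_zero k))
  set F := Iq q B with hF
  have hF0 : F.eval 0 = 0 := by
    rw [hF, Iq, Polynomial.sum, Polynomial.eval_finset_sum]; simp
  set a : ℕ → ℝ := fun k => (-1 : ℝ) ^ (n + 1 - k) * ((n + 1).choose k : ℝ) *
      (if k = 0 then 1 else (k : ℝ) / qnum q (k : ℝ)) with ha
  set s : ℝ := ((q - 1) ^ (n + 1) * ((n : ℝ) + 1))⁻¹ with hs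
  set pH : Polynomial ℝ := C s * ∑ k ∈ range (n + 2), C (a k) * (X ^ k - 1) with hpH
  set A : Polynomial ℝ := C (q - 1)⁻¹ * (X - 1) with hA
  set P1 : Polynomial ℝ := F.comp A with hP1
  -- a_k * (q^k - 1) formula
  have hak : ∀ k : ℕ, a (k + 1) * (q ^ (k + 1) - 1)
      = (-1 : ℝ) ^ (n - k) * (((n : ℝ) + 1) * (n.choose k : ℝ)) * (q - 1) := by
    intro k
    have hch : (((n + 1).choose (k + 1) : ℝ)) * ((k : ℝ) + 1) = ((n : ℝ) + 1) * (n.choose k : ℝ) := by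
      exact_mod_cast (Nat.add_one_mul_choose_eq n k).symm
    have hqk : qnum q ((k + 1 : ℕ) : ℝ) = (q ^ (k + 1) - 1) / (q - 1) := by
      rw [qnum, Real.rpow_natCast]
    have hu : ((k : ℝ) + 1) / ((q ^ (k + 1) - 1) / (q - 1)) * (q ^ (k + 1) - 1)
        = ((k : ℝ) + 1) * (q - 1) := by
      rw [div_div_eq_mul_div, div_mul_cancel₀ _ (sub_ne_zero.mpr (hpowne k))]
    simp only [ha, Nat.add_sub_add_right, if_neg (Nat.succ_ne_zero k), hqk]
    push_cast
    rw [mul_assoc, hu]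
    linear_combination ((-1 : ℝ) ^ (n - k) * (q - 1)) * hch
  -- evaluation of pH
  have hpHeval : ∀ t : ℝ, pH.eval t = s * ∑ k ∈ range (n + 2), a k * (t ^ k - 1) := by
    intro t
    rw [hpH, eval_mul, eval_C, Polynomial.eval_finset_sum]
    simp
  -- step for F (evaluated)
  have hFstep : ∀ y : ℝ, F.eval (q * y + 1) - F.eval y = (q - 1) * y ^ (n + 1) + y ^ n := by
    intro y
    have := congrArg (Polynomial.eval y) hB
    simpa [eval_comp] using this
  -- step for P1
  have hP1step : ∀ t : ℝ, P1.eval (q * t) - P1.eval t = ((q - 1) ^ n)⁻¹ * (t * (t - 1) ^ n) := by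
    intro t
    have h1 : A.eval (q * t) = q * A.eval t + 1 := by
      simp only [hA, eval_mul, eval_C, eval_sub, eval_X, eval_one]
      field_simp
      ring
    have h2 := hFstep (A.eval t)
    have h3 : P1.eval (q * t) - P1.eval t = (q - 1) * (A.eval t) ^ (n + 1) + (A.eval t) ^ n := by
      rw [hP1, eval_comp, eval_comp, h1, h2]
    rw [h3]
    simp only [hA, eval_mul, eval_C, eval_sub, eval_X, eval_one]
    rw [mul_pow, mul_pow, inv_pow, inv_pow, pow_succ]
    field_simp
    ring
  -- step for pH
  have hpHstep : ∀ t : ℝ, pH.eval (q * t) - pH.eval t = ((q - 1) ^ n)⁻¹ * (t * (t - 1) ^ n) := by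
    intro t
    have hterm : ∀ k : ℕ, a k * ((q * t) ^ k - 1) - a k * (t ^ k - 1)
        = a k * (q ^ k - 1) * t ^ k := by
      intro k; rw [mul_pow]; ring
    rw [hpHeval, hpHeval, ← mul_sub, ← Finset.sum_sub_distrib,
      Finset.sum_congr rfl (fun k _ => hterm k), Finset.sum_range_succ']
    simp only [pow_zero, sub_self, mul_zero, zero_mul, add_zero]
    have hsq : s * (((n : ℝ) + 1) * (q - 1)) = ((q - 1) ^ n)⁻¹ := by
      rw [hs, mul_inv, pow_succ, mul_inv]
      field_simp
    rw [sub_pow t 1 n, Finset.mul_sum, Finset.mul_sum, Finset.mul_sum]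
    refine Finset.sum_congr rfl fun j hj => ?_
    have hjn : j ≤ n := by simpa using Nat.lt_succ_iff.mp (Finset.mem_range.mp hj)
    have hsign : ((-1 : ℝ)) ^ (n - j) = (-1) ^ (j + n) := by
      rw [show j + n = (n - j) + 2 * j by omega, pow_add, pow_mul]
      simp
    rw [hak j, hsign, one_pow]
    linear_combination ((-1 : ℝ) ^ (j + n) * (n.choose j : ℝ) * t ^ (j + 1)) * hsq
  -- D := P1 - pH is invariant under X ↦ qX
  have hD : (P1 - pH).comp (C q * X) = P1 - pH := by
    apply Polynomial.funext
    intro t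
    rw [eval_comp]
    simp only [eval_mul, eval_C, eval_X, eval_sub]
    have := (hP1step t).trans (hpHstep t).symm
    linarith [hP1step t, hpHstep t]
  -- hence all positive coefficients vanish
  have hcoeff : ∀ k : ℕ, (P1 - pH).coeff (k + 1) = 0 := by
    intro k
    have h := congrArg (fun p => Polynomial.coeff p (k + 1)) hD
    simp only [comp_CmulX_coeff] at h
    have h2 : (P1 - pH).coeff (k + 1) * (q ^ (k + 1) - 1) = 0 := by linarith [h]
    rcases mul_eq_zero.mp h2 with h3 | h3
    · exact h3
    · exact absurd (by linarith : q ^ (k + 1) = 1) (hpowne k)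
  -- and D vanishes at 1
  have heval1 : (P1 - pH).eval 1 = 0 := by
    have hA1 : A.eval 1 = 0 := by simp [hA]
    have e1 : P1.eval 1 = 0 := by rw [hP1, eval_comp, hA1, hF0]
    have e2 : pH.eval 1 = 0 := by rw [hpHeval]; simp
    rw [eval_sub, e1, e2, sub_zero]
  -- D = 0
  have hD0 : P1 = pH := by
    have hc : P1 - pH = C ((P1 - pH).coeff 0) := by
      ext m
      cases m with
      | zero => simp
      | succ m => rw [hcoeff m, coeff_C]; simp
    have : (P1 - pH).coeff 0 = 0 := by
      have := heval1
      rw [hc] at this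
      simpa using this
    have : P1 - pH = 0 := by rw [hc, this, map_zero]
    exact sub_eq_zero.mp this
  -- final evaluation at t = q^x
  set t : ℝ := q ^ x with ht
  have hqnum : qnum q x = A.eval t := by
    simp only [hA, eval_mul, eval_C, eval_sub, eval_X, eval_one, qnum]
    rw [div_eq_inv_mul]
  have hFeval : F.eval (qnum q x) = pH.eval t := by
    rw [hqnum, ← eval_comp, ← hP1, hD0]
  rw [hFeval, hpHeval]
  have hx : ∀ k : ℕ, q ^ ((k : ℝ) * x) = t ^ k := by
    intro k
    rw [mul_comm, Real.rpow_mul hq.le, Real.rpow_natCast]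
  have h0 : ∀ k : ℕ, q ^ ((k : ℝ) * (0 : ℝ)) = (1 : ℝ) := by
    intro k; rw [mul_zero, Real.rpow_zero]
  have hetax : carlitzEta q (n + 1) x = ((q - 1) ^ (n + 1))⁻¹ * ∑ k ∈ range (n + 2), a k * t ^ k := by
    rw [carlitzEta]
    congr 1
    refine Finset.sum_congr rfl fun k _ => ?_
    rw [hx k, ha]
  have heta0 : carlitzEta q (n + 1) 0 = ((q - 1) ^ (n + 1))⁻¹ * ∑ k ∈ range (n + 2), a k := by
    rw [carlitzEta]
    congr 1
    refine Finset.sum_congr rfl fun k _ => ?_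
    rw [h0 k, ha, mul_one]
  rw [hetax, heta0]
  rw [show (∑ k ∈ range (n + 2), a k * (t ^ k - 1))
      = (∑ k ∈ range (n + 2), a k * t ^ k) - ∑ k ∈ range (n + 2), a k by
    rw [← Finset.sum_sub_distrib]; exact Finset.sum_congr rfl fun k _ => by ring]
  rw [hs]
  field_simp
end

section
/- For every n ∈ ℕ, one has B_{n,q}(0) = β_{n,q}; that is, the constant term of B_{n,q} equals the n-th Carlitz q-Bernoulli number β_{n,q} = (q − 1)^{−n} Σ_{k=0}^n (−1)^{n−k} C(n,k) (k+1)/[k+1]_q. -/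
open Polynomial Finset

/-- The `n`-th Carlitz `q`-Bernoulli number
`β_{n,q} = (q-1)^{-n} Σ_{k=0}^n (-1)^{n-k} C(n,k) (k+1)/[k+1]_q`. -/
noncomputable def carlitzBetaNum (q : ℝ) (n : ℕ) : ℝ :=
  ((q - 1) ^ n)⁻¹ * ∑ k ∈ Finset.range (n + 1),
    (-1 : ℝ) ^ (n - k) * (n.choose k : ℝ) *
      (((k : ℝ) + 1) / qnum q ((k : ℝ) + 1))

lemma aux_coeff_zero_pow (a : ℝ) (m : ℕ) :
    ((Polynomial.C a * Polynomial.X + 1 : Polynomial ℝ) ^ m).coeff 0 = 1 := by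
  rw [Polynomial.coeff_zero_eq_eval_zero]; simp

lemma aux_coeff_one_pow (a : ℝ) (m : ℕ) :
    ((Polynomial.C a * Polynomial.X + 1 : Polynomial ℝ) ^ m).coeff 1 = m * a := by
  induction m with
  | zero => simp [Polynomial.coeff_one]
  | succ m ih =>
    rw [pow_succ, mul_add, mul_one, coeff_add,
      show (Polynomial.C a * Polynomial.X + 1 : Polynomial ℝ) ^ m * (Polynomial.C a * Polynomial.X)
        = ((Polynomial.C a * Polynomial.X + 1) ^ m * Polynomial.C a) * Polynomial.X from by ring,
      coeff_mul_X, coeff_mul_C, aux_coeff_zero_pow, ih]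
    push_cast; ring

/-- `B_{n,q}(0) = β_{n,q}`: our `q`-Bernoulli numbers coincide with
Carlitz's `q`-Bernoulli numbers. -/
theorem stmt_10 (q : ℝ) (hq : 0 < q) (hq1 : q ≠ 1) (n : ℕ) (B : Polynomial ℝ)
    (hB : (Iq q B).comp (Polynomial.C q * Polynomial.X + 1) - Iq q B
      = Polynomial.C (q - 1) * Polynomial.X ^ (n + 1) + Polynomial.X ^ n) :
    B.eval 0 = carlitzBetaNum q n := by
  classical
  have ha : q - 1 ≠ 0 := sub_ne_zero.mpr hq1
  have hqd : ∀ d : ℕ, d ≠ 0 → q ^ d ≠ 1 := by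
    intro d hd h
    rcases lt_or_gt_of_ne hq1 with h1 | h1
    · have : q ^ d < 1 := pow_lt_one₀ hq.le h1 hd
      linarith
    · have : 1 < q ^ d := one_lt_pow₀ h1 hd
      linarith
  have hpow : ∀ m : ℕ, q ^ (m + 1) - 1 ≠ 0 := fun m =>
    sub_ne_zero.mpr (hqd (m + 1) (Nat.succ_ne_zero m))
  set u : Polynomial ℝ := Polynomial.C (q - 1) * Polynomial.X + 1 with hu_def
  set s : Polynomial ℝ := Polynomial.C q * Polynomial.X + 1 with hs_def
  set c : ℕ → ℝ := fun k =>
    (-1 : ℝ) ^ (n - k) * (n.choose k : ℝ) / ((q - 1) ^ n * (q ^ (k + 1) - 1)) with hc_def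
  set F : Polynomial ℝ := ∑ k ∈ range (n + 1), Polynomial.C (c k) * (u ^ (k + 1) - 1) with hF_def
  have hus : u.comp s = Polynomial.C q * u := by
    rw [hu_def, hs_def]
    simp only [C_sub, C_1, add_comp, mul_comp, sub_comp, C_comp, X_comp, one_comp]
    ring
  -- the functional equation for F
  have hFeq : F.comp s - F = Polynomial.C (q - 1) * Polynomial.X ^ (n + 1) + Polynomial.X ^ n := by
    have hcomp : F.comp s
        = ∑ k ∈ range (n + 1), Polynomial.C (c k) * ((Polynomial.C q * u) ^ (k + 1) - 1) := by
      rw [hF_def]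
      rw [show (∑ k ∈ range (n + 1), Polynomial.C (c k) * (u ^ (k + 1) - 1)).comp s
          = ∑ k ∈ range (n + 1), (Polynomial.C (c k) * (u ^ (k + 1) - 1)).comp s from by
        simp only [Polynomial.comp, eval₂_finset_sum]]
      simp only [mul_comp, sub_comp, pow_comp, one_comp, C_comp, hus]
    rw [hcomp, hF_def, ← Finset.sum_sub_distrib]
    have hterm : ∀ k ∈ range (n + 1),
        Polynomial.C (c k) * ((Polynomial.C q * u) ^ (k + 1) - 1)
          - Polynomial.C (c k) * (u ^ (k + 1) - 1)
        = (Polynomial.C (((q - 1) ^ n)⁻¹) * u)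
            * (Polynomial.C ((-1 : ℝ) ^ (n - k) * (n.choose k : ℝ)) * u ^ k) := by
      intro k _
      have hck : c k * (q ^ (k + 1) - 1) = (-1 : ℝ) ^ (n - k) * (n.choose k : ℝ) * ((q - 1) ^ n)⁻¹ := by
        rw [hc_def]
        have h1 := hpow k
        have h2 : (q - 1) ^ n ≠ 0 := pow_ne_zero n ha
        field_simp
      calc Polynomial.C (c k) * ((Polynomial.C q * u) ^ (k + 1) - 1)
            - Polynomial.C (c k) * (u ^ (k + 1) - 1)
          = Polynomial.C (c k * (q ^ (k + 1) - 1)) * u ^ (k + 1) := by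
            simp only [mul_pow, ← C_pow, C_mul, C_sub, C_1]
            ring
        _ = Polynomial.C ((-1 : ℝ) ^ (n - k) * (n.choose k : ℝ) * ((q - 1) ^ n)⁻¹) * u ^ (k + 1) := by
            rw [hck]
        _ = (Polynomial.C (((q - 1) ^ n)⁻¹) * u)
            * (Polynomial.C ((-1 : ℝ) ^ (n - k) * (n.choose k : ℝ)) * u ^ k) := by
            simp only [C_mul, pow_succ]
            ring
    rw [Finset.sum_congr rfl hterm, ← Finset.mul_sum]
    have hbin : ∑ k ∈ range (n + 1),
        Polynomial.C ((-1 : ℝ) ^ (n - k) * (n.choose k : ℝ)) * u ^ k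
        = (Polynomial.C (q - 1) * Polynomial.X) ^ n := by
      have h1 : (Polynomial.C (q - 1) * Polynomial.X : Polynomial ℝ) = u + (-1) := by
        rw [hu_def]; ring
      rw [h1, add_pow]
      refine Finset.sum_congr rfl fun k hk => ?_
      simp only [C_mul, C_pow, C_neg, C_1, Polynomial.C_eq_natCast]
      ring
    rw [hbin, mul_pow, ← C_pow]
    rw [show Polynomial.C (((q - 1) ^ n)⁻¹) * u * (Polynomial.C ((q - 1) ^ n) * Polynomial.X ^ n)
        = (Polynomial.C (((q - 1) ^ n)⁻¹) * Polynomial.C ((q - 1) ^ n)) * (u * Polynomial.X ^ n)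
        from by ring, ← C_mul, inv_mul_cancel₀ (pow_ne_zero n ha), C_1, one_mul, hu_def]
    ring
  -- difference is invariant under composition
  have hD : (Iq q B - F).comp s = Iq q B - F := by
    rw [sub_comp]
    have h1 : (Iq q B).comp s
        = Iq q B + (Polynomial.C (q - 1) * Polynomial.X ^ (n + 1) + Polynomial.X ^ n) := by
      linear_combination hB
    have h2 : F.comp s
        = F + (Polynomial.C (q - 1) * Polynomial.X ^ (n + 1) + Polynomial.X ^ n) := by
      linear_combination hFeq
    rw [h1, h2]; ring
  -- hence it is a constant
  have hd0 : (Iq q B - F).natDegree = 0 := by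
    by_contra hd
    have hDne : Iq q B - F ≠ 0 := fun h => hd (by rw [h, natDegree_zero])
    have hsdeg : s.natDegree = 1 := by
      have := natDegree_linear (a := q) (b := (1 : ℝ)) (ne_of_gt hq)
      simpa [hs_def] using this
    have hslc : s.leadingCoeff = q := by
      have := leadingCoeff_linear (a := q) (b := (1 : ℝ)) (ne_of_gt hq)
      simpa [hs_def] using this
    have hlc : ((Iq q B - F).comp s).leadingCoeff
        = (Iq q B - F).leadingCoeff * s.leadingCoeff ^ (Iq q B - F).natDegree :=
      leadingCoeff_comp (by rw [hsdeg]; exact one_ne_zero)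
    rw [hD, hslc] at hlc
    have hlcne : (Iq q B - F).leadingCoeff ≠ 0 := leadingCoeff_ne_zero.mpr hDne
    have hq' : q ^ (Iq q B - F).natDegree = 1 :=
      (mul_left_cancel₀ hlcne (by rw [mul_one]; exact hlc)).symm
    exact hqd _ hd hq'
  have hc1 : (Iq q B).coeff 1 = F.coeff 1 := by
    have h1 : (Iq q B - F).coeff 1 = 0 :=
      Polynomial.coeff_eq_zero_of_natDegree_lt (by rw [hd0]; exact one_pos)
    rw [Polynomial.coeff_sub] at h1
    linarith
  -- coefficient 1 of Iq q B is B.coeff 0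
  have hIq : (Iq q B).coeff 1 = B.coeff 0 := by
    rw [Iq, Polynomial.coeff_sum, Polynomial.sum_def]
    rw [Finset.sum_eq_single 0]
    · simp [div_self ha, pow_one]
    · intro k _ hk
      have h1 : (1 : ℕ) ≠ k + 1 := by omega
      simp [coeff_C_mul, coeff_X_pow, h1, hk]
    · intro h0
      simp [Polynomial.notMem_support_iff.mp h0]
  -- coefficient 1 of F
  have hF1 : F.coeff 1 = ∑ k ∈ range (n + 1), c k * (((k : ℝ) + 1) * (q - 1)) := by
    rw [hF_def, Polynomial.finset_sum_coeff]
    refine Finset.sum_congr rfl fun k hk => ?_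
    rw [Polynomial.coeff_C_mul, Polynomial.coeff_sub, hu_def, aux_coeff_one_pow]
    simp only [Polynomial.coeff_one]
    push_cast
    ring
  -- put everything together
  have hB0 : B.eval 0 = B.coeff 0 := (Polynomial.coeff_zero_eq_eval_zero B).symm
  rw [hB0, ← hIq, hc1, hF1, carlitzBetaNum, Finset.mul_sum]
  refine Finset.sum_congr rfl fun k hk => ?_
  have hcast : ((k : ℝ) + 1) = ((k + 1 : ℕ) : ℝ) := by push_cast; ring
  rw [qnum, hcast, Real.rpow_natCast, hc_def]
  have h1 := hpow k
  have h2 : (q - 1) ^ n ≠ 0 := pow_ne_zero n ha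
  field_simp
end

section
/- For every n ∈ ℕ and every real t, one has F_{n,q}′(t) = Σ_{k=0}^n C(n,k) β_{k,q} ((q − 1)t + 1)^k t^{n−k}, where F_{n,q}′ denotes the (classical) derivative of the polynomial F_{n,q}. -/
open Polynomial Finset

lemma aux_neg_one_pow (m : ℕ) (Y : ℝ) :
    ∑ j ∈ range (m+1), (-Y)^j * (Y-1)^(m-j) * (m.choose j : ℝ) = (-1:ℝ)^m := by
  have h := add_pow (-Y) (Y-1) m
  have h2 : -Y + (Y-1) = -1 := by ring
  rw [h2] at h
  exact h.symm

lemma aux_key (n : ℕ) (a : ℕ → ℝ) (Y : ℝ) :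
    ∑ k ∈ range (n+1), (n.choose k : ℝ) * Y^k * (Y-1)^(n-k) *
      (∑ i ∈ range (k+1), (-1:ℝ)^(k-i) * (k.choose i : ℝ) * a i)
    = ∑ k ∈ range (n+1), (n.choose k : ℝ) * (-1:ℝ)^(n-k) * Y^k * a k := by
  have swap :
      ∑ k ∈ range (n+1), ∑ i ∈ range (k+1),
        (n.choose k : ℝ) * Y^k * (Y-1)^(n-k) * ((-1:ℝ)^(k-i) * (k.choose i : ℝ) * a i)
      = ∑ i ∈ range (n+1), ∑ k ∈ Ico i (n+1),
        (n.choose k : ℝ) * Y^k * (Y-1)^(n-k) * ((-1:ℝ)^(k-i) * (k.choose i : ℝ) * a i) := by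
    have := Finset.sum_Ico_Ico_comm 0 (n+1)
      (fun i k => (n.choose k : ℝ) * Y^k * (Y-1)^(n-k) * ((-1:ℝ)^(k-i) * (k.choose i : ℝ) * a i))
    simpa [Nat.Ico_zero_eq_range] using this.symm
  calc
    _ = ∑ k ∈ range (n+1), ∑ i ∈ range (k+1),
        (n.choose k : ℝ) * Y^k * (Y-1)^(n-k) * ((-1:ℝ)^(k-i) * (k.choose i : ℝ) * a i) := by
        exact Finset.sum_congr rfl fun k _ => Finset.mul_sum _ _ _
    _ = ∑ i ∈ range (n+1), ∑ k ∈ Ico i (n+1),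
        (n.choose k : ℝ) * Y^k * (Y-1)^(n-k) * ((-1:ℝ)^(k-i) * (k.choose i : ℝ) * a i) := swap
    _ = ∑ i ∈ range (n+1), (n.choose i : ℝ) * (-1:ℝ)^(n-i) * Y^i * a i := by
        refine Finset.sum_congr rfl fun i hi => ?_
        rw [mem_range] at hi
        have hin : i ≤ n := Nat.lt_succ_iff.mp hi
        rw [Finset.sum_Ico_eq_sum_range]
        have hcount : n + 1 - i = (n - i) + 1 := by omega
        rw [hcount]
        have hterm : ∀ j ∈ range ((n-i)+1),
            (n.choose (i+j) : ℝ) * Y^(i+j) * (Y-1)^(n-(i+j)) *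
              ((-1:ℝ)^((i+j)-i) * ((i+j).choose i : ℝ) * a i)
            = ((n.choose i : ℝ) * Y^i * a i) * ((-Y)^j * (Y-1)^((n-i)-j) * ((n-i).choose j : ℝ)) := by
          intro j hj
          rw [mem_range] at hj
          have hjn : j ≤ n - i := Nat.lt_succ_iff.mp hj
          have h1 : (i+j) - i = j := by omega
          have h2 : n - (i+j) = (n-i) - j := by omega
          have h3 : (n.choose (i+j)) * ((i+j).choose i) = (n.choose i) * ((n-i).choose j) := by
            have := Nat.choose_mul (n := n) (show i ≤ i + j by omega)
            simpa [h1] using this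
          have h3' : (n.choose (i+j) : ℝ) * ((i+j).choose i : ℝ) = (n.choose i : ℝ) * ((n-i).choose j : ℝ) := by
            exact_mod_cast congrArg (Nat.cast : ℕ → ℝ) h3
          rw [h1, h2]
          have h4 : (-Y)^j = (-1:ℝ)^j * Y^j := by rw [neg_pow]
          rw [h4, pow_add]
          linear_combination (Y^i * Y^j * (Y-1)^((n-i)-j) * (-1:ℝ)^j * a i) * h3'
        rw [Finset.sum_congr rfl hterm, ← Finset.mul_sum, aux_neg_one_pow]
        ring


/-- `F_{n,q}′(t) = Σ_{k=0}^n C(n,k) β_{k,q} ((q−1)t+1)^k t^{n−k}` for all real `t`. -/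
theorem stmt_11 (q : ℝ) (hq : 0 < q) (hq1 : q ≠ 1) (n : ℕ) (B : Polynomial ℝ)
    (hB : (Iq q B).comp (Polynomial.C q * Polynomial.X + 1) - Iq q B
      = Polynomial.C (q - 1) * Polynomial.X ^ (n + 1) + Polynomial.X ^ n)
    (t : ℝ) :
    (Iq q B).derivative.eval t
      = ∑ k ∈ Finset.range (n + 1),
          (n.choose k : ℝ) * carlitzBetaNum q k * ((q - 1) * t + 1) ^ k * t ^ (n - k) := by
  have hq1' : q - 1 ≠ 0 := sub_ne_zero.mpr hq1
  have hqpow : ∀ k : ℕ, q ^ (k+1) - 1 ≠ 0 := by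
    intro k h
    have h' : q ^ (k+1) = 1 := by linarith
    rcases lt_or_gt_of_ne hq1 with hlt | hgt
    · have := pow_lt_one₀ hq.le hlt (n := k+1) (by omega); linarith
    · have := one_lt_pow₀ hgt (n := k+1) (by omega); linarith
  set c : ℕ → ℝ := fun k => (n.choose k : ℝ) * (-1:ℝ)^(n-k) / ((q-1)^n * (q^(k+1) - 1)) with hc
  set G : Polynomial ℝ := ∑ k ∈ range (n+1), C (c k) * ((C (q-1) * X + 1)^(k+1) - 1) with hGdef
  -- G satisfies the functional equation
  have hGeq : G.comp (C q * X + 1) - G = C (q - 1) * X ^ (n + 1) + X ^ n := by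
    apply Polynomial.funext
    intro x
    simp only [hGdef, eval_sub, eval_comp, eval_add, eval_mul, eval_one, eval_C, eval_X,
      eval_pow, eval_finset_sum]
    rw [← Finset.sum_sub_distrib]
    have step : ∀ k ∈ range (n+1),
        c k * (((q-1)*(q*x+1)+1)^(k+1) - 1) - c k * (((q-1)*x+1)^(k+1) - 1)
        = (n.choose k : ℝ) * (-1:ℝ)^(n-k) / (q-1)^n * ((q-1)*x+1)^(k+1) := by
      intro k _
      have h1 : (q-1)*(q*x+1)+1 = q * ((q-1)*x+1) := by ring
      rw [h1, mul_pow]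
      have h2 : c k * (q^(k+1)-1) = (n.choose k : ℝ) * (-1:ℝ)^(n-k) / (q-1)^n := by
        show (n.choose k : ℝ) * (-1:ℝ)^(n-k) / ((q-1)^n * (q^(k+1) - 1)) * (q^(k+1)-1)
          = (n.choose k : ℝ) * (-1:ℝ)^(n-k) / (q-1)^n
        rw [← div_div, div_mul_cancel₀ _ (hqpow k)]
      linear_combination (((q-1)*x+1)^(k+1)) * h2
    rw [Finset.sum_congr rfl step]
    have hbin := add_pow ((q-1)*x+1) (-1 : ℝ) n
    have h2 : (q-1)*x+1 + (-1 : ℝ) = (q-1)*x := by ring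
    rw [h2] at hbin
    have : ∑ k ∈ range (n+1), (n.choose k : ℝ) * (-1:ℝ)^(n-k) / (q-1)^n * ((q-1)*x+1)^(k+1)
        = (((q-1)*x+1) * (((q-1)*x)^n)) / (q-1)^n := by
      rw [hbin, Finset.mul_sum, Finset.sum_div]
      exact Finset.sum_congr rfl fun k _ => by ring
    rw [this, mul_pow]
    field_simp
    ring
  have hG0 : G.eval 0 = 0 := by
    simp [hGdef, eval_finset_sum]
  have hIq0 : (Iq q B).eval 0 = 0 := by
    simp [Iq, Polynomial.sum_def, eval_finset_sum]
  have hCqX : (C q * X + 1 : Polynomial ℝ) = C q * X + C 1 := by rw [map_one]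
  have huniq : Iq q B = G := by
    have hcomp : (Iq q B - G).comp (C q * X + 1) = Iq q B - G := by
      rw [Polynomial.sub_comp]
      linear_combination hB - hGeq
    set D := Iq q B - G with hDdef
    by_contra hne
    have hDne : D ≠ 0 := fun h => hne (sub_eq_zero.mp h)
    have hlin : (C q * X + 1 : Polynomial ℝ).natDegree = 1 := by
      rw [hCqX, natDegree_linear hq.ne']
    have hlc := congrArg leadingCoeff hcomp
    rw [Polynomial.leadingCoeff_comp (by rw [hlin]; exact one_ne_zero)] at hlc
    have hlcq : (C q * X + 1 : Polynomial ℝ).leadingCoeff = q := by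
      rw [hCqX, leadingCoeff_linear hq.ne']
    rw [hlcq] at hlc
    have hl0 : D.leadingCoeff ≠ 0 := leadingCoeff_ne_zero.mpr hDne
    have hql : q ^ D.natDegree = 1 := by
      have h' : D.leadingCoeff * q ^ D.natDegree = D.leadingCoeff * 1 := by
        rw [mul_one]; exact hlc
      exact mul_left_cancel₀ hl0 h'
    have hd0 : D.natDegree = 0 := by
      by_contra hd
      rcases lt_or_gt_of_ne hq1 with hlt | hgt
      · have := pow_lt_one₀ hq.le hlt hd; linarith
      · have := one_lt_pow₀ hgt hd; linarith
    have hDC := Polynomial.eq_C_of_natDegree_eq_zero hd0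
    have hDc0 : D.coeff 0 = 0 := by
      rw [Polynomial.coeff_zero_eq_eval_zero, hDdef, eval_sub, hIq0, hG0, sub_zero]
    rw [hDc0, map_zero] at hDC
    exact hDne hDC
  rw [huniq]
  have hder : G.derivative
      = ∑ k ∈ range (n+1), C (c k * (((k:ℝ)+1) * (q-1))) * (C (q-1) * X + 1)^k := by
    rw [hGdef, derivative_sum]
    refine Finset.sum_congr rfl fun k _ => ?_
    rw [derivative_C_mul, derivative_sub, derivative_one, sub_zero, derivative_pow]
    have hP' : derivative (C (q-1) * X + 1 : Polynomial ℝ) = C (q-1) := by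
      simp
    rw [hP']
    have hcast : ((k+1 : ℕ) : ℝ) = (k:ℝ) + 1 := by push_cast; ring
    rw [Nat.add_sub_cancel, hcast]
    rw [map_mul, map_mul]
    ring
  rw [hder, eval_finset_sum]
  simp only [eval_mul, eval_C, eval_pow, eval_add, eval_one, eval_X]
  -- final scalar identity
  set Y : ℝ := (q-1)*t + 1 with hYdef
  set a : ℕ → ℝ := fun i => ((i:ℝ)+1)*(q-1)/(q^(i+1) - 1) with ha
  have hqnum : ∀ i : ℕ, ((i:ℝ)+1) / qnum q ((i:ℝ)+1) = a i := by
    intro i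
    have hr : q ^ ((i:ℝ)+1) = q ^ (i+1 : ℕ) := by
      rw [show ((i:ℝ)+1) = ((i+1 : ℕ):ℝ) by push_cast; ring, Real.rpow_natCast]
    rw [qnum, hr, div_div_eq_mul_div, ha]
  have hbeta : ∀ k : ℕ, carlitzBetaNum q k
      = ((q-1)^k)⁻¹ * ∑ i ∈ range (k+1), (-1:ℝ)^(k-i) * (k.choose i : ℝ) * a i := by
    intro k
    unfold carlitzBetaNum
    congr 1
    exact Finset.sum_congr rfl fun i _ => by rw [hqnum i]
  have key := aux_key n a Y
  rw [show Y - 1 = (q-1)*t by rw [hYdef]; ring] at key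
  calc ∑ k ∈ range (n+1), c k * (((k:ℝ)+1) * (q-1)) * Y^k
      = (∑ k ∈ range (n+1), (n.choose k : ℝ) * (-1:ℝ)^(n-k) * Y^k * a k) / (q-1)^n := by
        rw [Finset.sum_div]
        refine Finset.sum_congr rfl fun k _ => ?_
        rw [hc, ha]
        field_simp
    _ = (∑ k ∈ range (n+1), (n.choose k : ℝ) * Y^k * ((q-1)*t)^(n-k) *
          (∑ i ∈ range (k+1), (-1:ℝ)^(k-i) * (k.choose i : ℝ) * a i)) / (q-1)^n := by
        rw [key]
    _ = ∑ k ∈ range (n+1), (n.choose k : ℝ) * carlitzBetaNum q k * Y^k * t^(n-k) := by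
        rw [Finset.sum_div]
        refine Finset.sum_congr rfl fun k hk => ?_
        rw [mem_range] at hk
        have hkn : k ≤ n := Nat.lt_succ_iff.mp hk
        rw [hbeta k, mul_pow]
        have hpow : (q-1)^k * (q-1)^(n-k) = (q-1)^n := by
          rw [← pow_add]; congr 1; omega
        field_simp
        linear_combination ((n.choose k : ℝ) * Y^k * t^(n-k) *
          (∑ i ∈ range (k+1), (-1:ℝ)^(k-i) * (k.choose i : ℝ) * a i)) * hpow
end

section
/- For every n ∈ ℕ, the polynomial F_{n,q} admits the explicit expansion F_{n,q}(X) = Σ_{k=0}^n Σ_{i=0}^k C(n,k) C(k,i) β_{k,q} (q − 1)^i X^{n+i−k+1}/(n + i − k + 1). -/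
open Polynomial Finset

lemma gkid (q : ℝ) (k r : ℕ) (x : ℝ) :
    (q-1)^(r+1) * ∑ i ∈ Finset.range (k+1),
        (k.choose i : ℝ) * (q-1)^i * x^(r+i+1) / ((r+i+1 : ℕ) : ℝ)
      = ∑ j ∈ Finset.range (r+1),
        (-1:ℝ)^(r-j) * (r.choose j : ℝ) * (((q-1)*x+1)^(j+k+1) - 1) / ((j+k+1 : ℕ) : ℝ) := by
  set P : Polynomial ℝ := C ((q-1)^(r+1)) * ∑ i ∈ Finset.range (k+1),
      C ((k.choose i : ℝ) * (q-1)^i / ((r+i+1 : ℕ) : ℝ)) * X^(r+i+1) with hP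
  set Q : Polynomial ℝ := ∑ j ∈ Finset.range (r+1),
      C ((-1:ℝ)^(r-j) * (r.choose j : ℝ) / ((j+k+1 : ℕ) : ℝ)) * ((C (q-1) * X + 1)^(j+k+1) - 1) with hQ
  have hPQ : P = Q := by
    have hdP : derivative P = C ((q-1)^(r+1)) * (X^r * (C (q-1) * X + 1)^k) := by
      rw [hP, derivative_C_mul, derivative_sum]
      congr 1
      have hexp : ∀ i ∈ Finset.range (k+1),
          derivative (C ((k.choose i : ℝ) * (q-1)^i / ((r+i+1 : ℕ) : ℝ)) * X^(r+i+1))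
            = ((C (q-1) * X)^i * 1^(k-i) * ((k.choose i : ℕ) : Polynomial ℝ)) * X^r := by
        intro i _
        rw [derivative_C_mul, derivative_X_pow, Nat.add_sub_cancel]
        have hc : (((r+i+1 : ℕ)) : ℝ) ≠ 0 := Nat.cast_ne_zero.mpr (Nat.succ_ne_zero _)
        have keyC : C ((k.choose i : ℝ) * (q-1)^i / ((r+i+1 : ℕ) : ℝ)) * C (((r+i+1 : ℕ)) : ℝ)
            = ((k.choose i : ℕ) : Polynomial ℝ) * (C (q-1))^i := by
          rw [← C_mul, div_mul_cancel₀ _ hc, C_mul, C_pow, C_eq_natCast]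
        linear_combination (X : Polynomial ℝ)^(r+i) * keyC
      rw [Finset.sum_congr rfl hexp, ← Finset.sum_mul, ← add_pow]
      ring
    have hdQ : derivative Q = C ((q-1)^(r+1)) * (X^r * (C (q-1) * X + 1)^k) := by
      rw [hQ, derivative_sum]
      have hexp : ∀ j ∈ Finset.range (r+1),
          derivative (C ((-1:ℝ)^(r-j) * (r.choose j : ℝ) / ((j+k+1 : ℕ) : ℝ)) * ((C (q-1) * X + 1)^(j+k+1) - 1))
            = C (q-1) * ((C (q-1) * X + 1)^k *
                ((C (q-1) * X + 1)^j * (-1 : Polynomial ℝ)^(r-j) * ((r.choose j : ℕ) : Polynomial ℝ))) := by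
        intro j _
        rw [derivative_C_mul, derivative_sub, derivative_one, sub_zero, derivative_pow,
          Nat.add_sub_cancel]
        have hd1 : derivative (C (q-1) * X + 1) = C (q-1) := by simp
        rw [hd1]
        have hc : (((j+k+1 : ℕ)) : ℝ) ≠ 0 := Nat.cast_ne_zero.mpr (Nat.succ_ne_zero _)
        have keyC : C ((-1:ℝ)^(r-j) * (r.choose j : ℝ) / ((j+k+1 : ℕ) : ℝ)) * C (((j+k+1 : ℕ)) : ℝ)
            = (-1 : Polynomial ℝ)^(r-j) * ((r.choose j : ℕ) : Polynomial ℝ) := by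
          rw [← C_mul, div_mul_cancel₀ _ hc, C_mul, C_pow, C_neg, C_1, C_eq_natCast]
        linear_combination ((C (q-1) * X + 1) : Polynomial ℝ)^(j+k) * C (q-1) * keyC
      rw [Finset.sum_congr rfl hexp, ← Finset.mul_sum, ← Finset.mul_sum, ← add_pow,
        show ((C (q-1) * X + 1 + -1 : Polynomial ℝ)) = C (q-1) * X by ring,
        mul_pow, ← C_pow, pow_succ, C_mul]
      ring
    have hder : derivative (P - Q) = 0 := by rw [derivative_sub, hdP, hdQ, sub_self]
    have h0 : (P - Q).eval 0 = 0 := by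
      have hP0 : P.eval 0 = 0 := by
        rw [hP]
        simp [eval_finset_sum, zero_pow]
      have hQ0 : Q.eval 0 = 0 := by
        rw [hQ]
        simp [eval_finset_sum]
      rw [eval_sub, hP0, hQ0, sub_self]
    have := Polynomial.eq_C_of_derivative_eq_zero hder
    rw [coeff_zero_eq_eval_zero, h0, C_0] at this
    exact sub_eq_zero.mp this
  have := congrArg (eval x) hPQ
  rw [hP, hQ] at this
  simp only [eval_mul, eval_C, eval_finset_sum, eval_pow, eval_X, eval_add, eval_one,
    eval_sub] at this
  rw [show (q-1)^(r+1) * ∑ i ∈ Finset.range (k+1),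
        (k.choose i : ℝ) * (q-1)^i * x^(r+i+1) / ((r+i+1 : ℕ) : ℝ)
      = (q-1)^(r+1) * ∑ i ∈ Finset.range (k+1),
        (k.choose i : ℝ) * (q-1)^i / ((r+i+1 : ℕ) : ℝ) * x^(r+i+1) by
    congr 1; apply Finset.sum_congr rfl; intro i _; ring]
  rw [this]
  apply Finset.sum_congr rfl; intro j _; ring

lemma altsum (N : ℕ) :
    ∑ r ∈ Finset.range (N+1), (-1:ℝ)^r * (N.choose r : ℝ) = if N = 0 then 1 else 0 := by
  have h := Int.alternating_sum_range_choose (n := N)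
  have h2 := congrArg (fun z : ℤ => (z : ℝ)) h
  push_cast at h2
  rw [h2]

lemma Tm (q : ℝ) (hq1 : q - 1 ≠ 0) (m : ℕ) :
    ∑ k ∈ Finset.range (m+1), (m.choose k : ℝ) * (q-1)^k * carlitzBetaNum q k
      = ((m:ℝ)+1) / qnum q ((m:ℝ)+1) := by
  have step1 : ∀ k, (m.choose k : ℝ) * (q-1)^k * carlitzBetaNum q k
      = ∑ s ∈ Finset.range (k+1), (m.choose k : ℝ) *
          ((-1:ℝ)^(k-s) * (k.choose s : ℝ) * (((s:ℝ)+1) / qnum q ((s:ℝ)+1))) := by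
    intro k
    unfold carlitzBetaNum
    rw [← mul_assoc, mul_assoc (m.choose k : ℝ), mul_inv_cancel₀ (pow_ne_zero _ hq1), mul_one,
      Finset.mul_sum]
  rw [Finset.sum_congr rfl (fun k _ => step1 k)]
  simp only [Finset.range_eq_Ico]
  have swap : ∑ k ∈ Finset.Ico 0 (m+1), ∑ s ∈ Finset.Ico 0 (k+1), (m.choose k : ℝ) *
          ((-1:ℝ)^(k-s) * (k.choose s : ℝ) * (((s:ℝ)+1) / qnum q ((s:ℝ)+1)))
      = ∑ s ∈ Finset.Ico 0 (m+1), ∑ k ∈ Finset.Ico s (m+1), (m.choose k : ℝ) *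
          ((-1:ℝ)^(k-s) * (k.choose s : ℝ) * (((s:ℝ)+1) / qnum q ((s:ℝ)+1))) := by
    exact (Finset.sum_Ico_Ico_comm 0 (m+1) (fun s k => (m.choose k : ℝ) *
          ((-1:ℝ)^(k-s) * (k.choose s : ℝ) * (((s:ℝ)+1) / qnum q ((s:ℝ)+1))))).symm
  rw [swap]
  have inner : ∀ s ∈ Finset.Ico 0 (m+1),
      ∑ k ∈ Finset.Ico s (m+1), (m.choose k : ℝ) *
          ((-1:ℝ)^(k-s) * (k.choose s : ℝ) * (((s:ℝ)+1) / qnum q ((s:ℝ)+1)))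
        = (if m - s = 0 then 1 else 0) * (m.choose s : ℝ) * (((s:ℝ)+1) / qnum q ((s:ℝ)+1)) := by
    intro s hs
    rw [Finset.mem_Ico] at hs
    have hsm : s ≤ m := by omega
    rw [Finset.sum_Ico_eq_sum_range]
    have term : ∀ u ∈ Finset.range (m+1-s),
        (m.choose (s+u) : ℝ) * ((-1:ℝ)^((s+u)-s) * ((s+u).choose s : ℝ) * (((s:ℝ)+1) / qnum q ((s:ℝ)+1)))
          = ((-1:ℝ)^u * ((m-s).choose u : ℝ)) * ((m.choose s : ℝ) * (((s:ℝ)+1) / qnum q ((s:ℝ)+1))) := by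
      intro u hu
      rw [Finset.mem_range] at hu
      have h1 : s + u ≤ m := by omega
      have h2 : (m.choose (s+u)) * ((s+u).choose s) = m.choose s * ((m-s).choose u) := by
        have := Nat.choose_mul (n := m) (k := s+u) (s := s) (Nat.le_add_right s u)
        rw [this, Nat.add_sub_cancel_left]
      rw [Nat.add_sub_cancel_left]
      have h2' : (m.choose (s+u) : ℝ) * ((s+u).choose s : ℝ) = (m.choose s : ℝ) * ((m-s).choose u : ℝ) := by
        exact_mod_cast congrArg (fun z : ℕ => (z:ℝ)) h2
      linear_combination ((-1:ℝ)^u * (((s:ℝ)+1) / qnum q ((s:ℝ)+1))) * h2'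
    rw [Finset.sum_congr rfl term, ← Finset.sum_mul,
      show m+1-s = (m-s)+1 by omega, altsum (m-s)]
    ring
  rw [Finset.sum_congr rfl inner]
  rw [← Finset.range_eq_Ico, Finset.sum_eq_single m]
  · simp
  · intro s hs hne
    rw [Finset.mem_range] at hs
    rw [if_neg (by omega)]
    ring
  · intro h
    exact absurd (Finset.self_mem_range_succ m) h

lemma powne1 (q : ℝ) (hq : 0 < q) (hq1 : q ≠ 1) (m : ℕ) : q ^ (m+1) ≠ 1 := by
  rcases lt_or_gt_of_ne hq1 with h | h
  · exact ne_of_lt (pow_lt_one₀ (le_of_lt hq) h (Nat.succ_ne_zero m))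
  · exact ne_of_gt (one_lt_pow₀ h (Nat.succ_ne_zero m))

lemma qnum_nat (q : ℝ) (hq : 0 < q) (k : ℕ) :
    qnum q ((k:ℝ)+1) = (q ^ (k+1) - 1)/(q-1) := by
  unfold qnum
  rw [show ((k:ℝ)+1) = ((k+1 : ℕ) : ℝ) by push_cast; ring, Real.rpow_natCast]

noncomputable def Rfun (q : ℝ) (n : ℕ) (x : ℝ) : ℝ :=
  ∑ k ∈ Finset.range (n + 1), ∑ i ∈ Finset.range (k + 1),
    (n.choose k : ℝ) * (k.choose i : ℝ) * carlitzBetaNum q k * (q - 1) ^ i *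
      x ^ (n + i - k + 1) / ((n + i - k + 1 : ℕ) : ℝ)

lemma stepA (q : ℝ) (hq1 : q - 1 ≠ 0) (n : ℕ) (x : ℝ) :
    Rfun q n x = ∑ k ∈ Finset.range (n+1),
      (n.choose k : ℝ) * carlitzBetaNum q k * ((q-1)^(n-k+1))⁻¹ *
        ∑ j ∈ Finset.range (n-k+1),
          (-1:ℝ)^(n-k-j) * ((n-k).choose j : ℝ) * (((q-1)*x+1)^(j+k+1) - 1) / ((j+k+1 : ℕ) : ℝ) := by
  unfold Rfun
  apply Finset.sum_congr rfl
  intro k hk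
  rw [Finset.mem_range] at hk
  have hkn : k ≤ n := by omega
  have inner1 : ∀ i ∈ Finset.range (k+1),
      (n.choose k : ℝ) * (k.choose i : ℝ) * carlitzBetaNum q k * (q - 1) ^ i *
        x ^ (n + i - k + 1) / ((n + i - k + 1 : ℕ) : ℝ)
      = (n.choose k : ℝ) * carlitzBetaNum q k *
        ((k.choose i : ℝ) * (q-1)^i * x^((n-k)+i+1) / (((n-k)+i+1 : ℕ) : ℝ)) := by
    intro i _
    rw [show n + i - k = (n-k) + i by omega]
    ring
  rw [Finset.sum_congr rfl inner1, ← Finset.mul_sum]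
  rw [← inv_mul_cancel_left₀ (pow_ne_zero (n-k+1) hq1)
    (∑ i ∈ Finset.range (k+1), (k.choose i : ℝ) * (q-1)^i * x^((n-k)+i+1) / (((n-k)+i+1 : ℕ) : ℝ))]
  rw [gkid q k (n-k) x]
  ring

lemma stepB (q : ℝ) (hq : 0 < q) (hq1 : q ≠ 1) (n : ℕ) (x : ℝ) :
    Rfun q n (q*x+1) - Rfun q n x = (q-1)*x^(n+1) + x^n := by
  have hq1' : q - 1 ≠ 0 := sub_ne_zero.mpr hq1
  set u : ℝ := (q-1)*x+1 with hu
  have hushift : (q-1)*(q*x+1)+1 = q*u := by rw [hu]; ring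
  set A : ℕ → ℕ → ℝ := fun k m =>
    (n.choose k : ℝ) * carlitzBetaNum q k * ((q-1)^(n-k+1))⁻¹ *
      ((-1:ℝ)^(n-m) * ((n-k).choose (m-k) : ℝ) * (q^(m+1)-1) * u^(m+1) / ((m+1 : ℕ) : ℝ)) with hA
  have key : Rfun q n (q*x+1) - Rfun q n x
      = ∑ k ∈ Finset.range (n+1), ∑ j ∈ Finset.range (n-k+1), A k (k+j) := by
    rw [stepA q hq1' n (q*x+1), stepA q hq1' n x, ← Finset.sum_sub_distrib]
    apply Finset.sum_congr rfl
    intro k hk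
    rw [Finset.mem_range] at hk
    rw [hushift, ← mul_sub, ← Finset.sum_sub_distrib]
    rw [Finset.mul_sum]
    apply Finset.sum_congr rfl
    intro j hj
    rw [Finset.mem_range] at hj
    rw [hA]
    simp only []
    rw [show (k+j)-k = j by omega, show n-(k+j) = n-k-j by omega, show (k+j)+1 = j+k+1 by omega]
    rw [mul_pow]
    ring
  rw [key]
  have reind : ∀ k ∈ Finset.range (n+1),
      ∑ j ∈ Finset.range (n-k+1), A k (k+j) = ∑ m ∈ Finset.Ico k (n+1), A k m := by
    intro k hk
    rw [Finset.mem_range] at hk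
    rw [Finset.sum_Ico_eq_sum_range, show n+1-k = n-k+1 by omega]
  rw [Finset.sum_congr rfl reind, Finset.range_eq_Ico, Finset.sum_Ico_Ico_comm 0 (n+1) A]
  have inner : ∀ m ∈ Finset.Ico 0 (n+1),
      ∑ k ∈ Finset.Ico 0 (m+1), A k m
        = ((q-1)^n)⁻¹ * ((-1:ℝ)^(n-m) * (n.choose m : ℝ) * u^(m+1)) := by
    intro m hm
    rw [Finset.mem_Ico] at hm
    have hmn : m ≤ n := by omega
    have terme : ∀ k ∈ Finset.Ico 0 (m+1),
        A k m = ((q-1)^(n+1))⁻¹ * ((-1:ℝ)^(n-m) * (n.choose m : ℝ) * (q^(m+1)-1) * u^(m+1) / ((m+1 : ℕ) : ℝ)) *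
          ((m.choose k : ℝ) * (q-1)^k * carlitzBetaNum q k) := by
      intro k hk
      rw [Finset.mem_Ico] at hk
      have hkm : k ≤ m := by omega
      have hch : (n.choose k : ℝ) * ((n-k).choose (m-k) : ℝ) = (n.choose m : ℝ) * (m.choose k : ℝ) := by
        have := Nat.choose_mul (n := n) (k := m) (s := k) hkm
        exact_mod_cast (congrArg (fun z : ℕ => (z:ℝ)) this).symm
      have hinv : ((q-1)^(n-k+1))⁻¹ = (q-1)^k * ((q-1)^(n+1))⁻¹ := by
        have h := pow_add (q-1) (n-k+1) k
        rw [show n-k+1+k = n+1 by omega] at h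
        rw [h, mul_inv, mul_comm (((q-1)^(n-k+1))⁻¹) (((q-1)^k)⁻¹), ← mul_assoc,
          mul_inv_cancel₀ (pow_ne_zero k hq1'), one_mul]
      rw [hA]
      simp only []
      rw [hinv]
      linear_combination (carlitzBetaNum q k * (q-1)^k * ((q-1)^(n+1))⁻¹ *
        ((-1:ℝ)^(n-m) * (q^(m+1)-1) * u^(m+1) / ((m+1 : ℕ) : ℝ))) * hch
    rw [Finset.sum_congr rfl terme, ← Finset.mul_sum, ← Finset.range_eq_Ico, Tm q hq1' m,
      qnum_nat q hq m]
    have h1 : ((m:ℝ)+1) ≠ 0 := by positivity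
    have h2 : q^(m+1) - 1 ≠ 0 := sub_ne_zero.mpr (powne1 q hq hq1 m)
    have h3 : ((q-1)^(n+1))⁻¹ * (q-1) = ((q-1)^n)⁻¹ := by
      rw [pow_succ, mul_inv, mul_assoc, inv_mul_cancel₀ hq1', mul_one]
    rw [show ((m+1 : ℕ) : ℝ) = (m:ℝ)+1 by push_cast; ring]
    field_simp
    ring
  rw [Finset.sum_congr rfl inner, ← Finset.mul_sum]
  have bin : ∑ m ∈ Finset.Ico 0 (n+1), (-1:ℝ)^(n-m) * (n.choose m : ℝ) * u^(m+1)
      = ((q-1)*x)^n * u := by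
    have expand : ∀ m ∈ Finset.Ico 0 (n+1),
        (-1:ℝ)^(n-m) * (n.choose m : ℝ) * u^(m+1) = (u^m * (-1:ℝ)^(n-m) * (n.choose m : ℝ)) * u := by
      intro m _
      rw [pow_succ]
      ring
    rw [Finset.sum_congr rfl expand, ← Finset.sum_mul, ← Finset.range_eq_Ico, ← add_pow,
      show u + (-1:ℝ) = (q-1)*x by rw [hu]; ring]
  rw [bin, mul_pow, ← mul_assoc, mul_comm (((q-1)^n)⁻¹), mul_assoc ((q-1)^n),
    mul_comm (x^n), ← mul_assoc, mul_inv_cancel₀ (pow_ne_zero n hq1'), one_mul, hu]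
  ring

lemma uniq (q : ℝ) (hq : 0 < q) (P Q : Polynomial ℝ)
    (h : ∀ x : ℝ, P.eval (q*x+1) - P.eval x = Q.eval (q*x+1) - Q.eval x)
    (h0 : P.eval 0 = Q.eval 0) : ∀ x, P.eval x = Q.eval x := by
  set H := P - Q with hHdef
  have hH : ∀ x : ℝ, H.eval (q*x+1) = H.eval x := by
    intro x
    have := h x
    simp only [hHdef, eval_sub]
    linarith
  -- orbit of 0
  let t : ℕ → ℝ := fun m => Nat.rec (0:ℝ) (fun _ y => q * y + 1) m
  have ht0 : t 0 = 0 := rfl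
  have hts : ∀ m, t (m+1) = q * t m + 1 := fun m => rfl
  have htmono : StrictMono t := by
    have hd : ∀ m, t m < t (m+1) := by
      intro m
      induction m with
      | zero => rw [ht0, hts, ht0]; nlinarith
      | succ m ih =>
        rw [hts (m+1), hts m] at *
        nlinarith
    exact strictMono_nat_of_lt_succ hd
  have hval : ∀ m, H.eval (t m) = H.eval 0 := by
    intro m
    induction m with
    | zero => rw [ht0]
    | succ m ih => rw [hts, hH, ih]
  have hK : H - C (H.eval 0) = 0 := by
    apply Polynomial.eq_zero_of_infinite_isRoot
    apply Set.infinite_of_injective_forall_mem (f := t) htmono.injective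
    intro m
    simp [IsRoot, hval m]
  have hHC : H = C (H.eval 0) := by linear_combination (norm := ring_nf) hK
  intro x
  have := congrArg (eval x) hHC
  simp only [hHdef, eval_sub, eval_C] at this
  have h00 : P.eval 0 - Q.eval 0 = 0 := by rw [h0]; ring
  linarith [this, h00]

/-- Explicit expansion of `F_{n,q}`:
`F_{n,q}(X) = Σ_{k=0}^n Σ_{i=0}^k C(n,k) C(k,i) β_{k,q} (q−1)^i X^{n+i−k+1}/(n+i−k+1)`. -/
theorem stmt_12 (q : ℝ) (hq : 0 < q) (hq1 : q ≠ 1) (n : ℕ) (B : Polynomial ℝ)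
    (hB : (Iq q B).comp (Polynomial.C q * Polynomial.X + 1) - Iq q B
      = Polynomial.C (q - 1) * Polynomial.X ^ (n + 1) + Polynomial.X ^ n)
    (x : ℝ) :
    (Iq q B).eval x
      = ∑ k ∈ Finset.range (n + 1), ∑ i ∈ Finset.range (k + 1),
          (n.choose k : ℝ) * (k.choose i : ℝ) * carlitzBetaNum q k * (q - 1) ^ i *
            x ^ (n + i - k + 1) / ((n + i - k + 1 : ℕ) : ℝ) := by
  set Gp : Polynomial ℝ := ∑ k ∈ Finset.range (n + 1), ∑ i ∈ Finset.range (k + 1),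
      C ((n.choose k : ℝ) * (k.choose i : ℝ) * carlitzBetaNum q k * (q - 1) ^ i /
        ((n + i - k + 1 : ℕ) : ℝ)) * X ^ (n + i - k + 1) with hGp
  have hGev : ∀ y : ℝ, Gp.eval y = Rfun q n y := by
    intro y
    rw [hGp]
    unfold Rfun
    rw [eval_finset_sum]
    apply Finset.sum_congr rfl
    intro k _
    rw [eval_finset_sum]
    apply Finset.sum_congr rfl
    intro i _
    simp only [eval_mul, eval_C, eval_pow, eval_X]
    ring
  have hPfe : ∀ y : ℝ, (Iq q B).eval (q*y+1) - (Iq q B).eval y = (q-1)*y^(n+1) + y^n := by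
    intro y
    have h := congrArg (eval y) hB
    simp only [eval_sub, eval_comp, eval_add, eval_mul, eval_C, eval_X, eval_one, eval_pow] at h
    convert h using 2 <;> ring
  have hGfe : ∀ y : ℝ, Gp.eval (q*y+1) - Gp.eval y = (q-1)*y^(n+1) + y^n := by
    intro y
    rw [hGev, hGev, stepB q hq hq1 n y]
  have hP0 : (Iq q B).eval 0 = 0 := by
    unfold Iq
    rw [Polynomial.sum_def, eval_finset_sum]
    apply Finset.sum_eq_zero
    intro k _
    simp [zero_pow]
  have hG0 : Gp.eval 0 = 0 := by
    rw [hGp, eval_finset_sum]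
    apply Finset.sum_eq_zero
    intro k _
    rw [eval_finset_sum]
    apply Finset.sum_eq_zero
    intro i _
    simp [zero_pow]
  have := uniq q hq (Iq q B) Gp (fun y => by rw [hPfe y, hGfe y]) (by rw [hP0, hG0]) x
  rw [this, hGev x]
  rfl
end

section
/- For every n ∈ ℕ and every real number x, the value B_{n,q}(x) tends to B_n(x) as q → 1 (with q ranging over (0, ∞) \ {1}), where B_n(x) is the n-th classical Bernoulli polynomial evaluated at x (with convention B_1(x) = x − 1/2). In other words, the polynomials B_{n,q} are genuine q-analogues of the classical Bernoulli polynomials. -/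
open Polynomial Finset

/- ### Auxiliary lemmas -/

lemma coeff_pow_linear {R : Type*} [CommRing R] (q : R) (m i : ℕ) :
    ((C q * X + 1 : R[X])^m).coeff i = (m.choose i : R) * q^i := by
  rw [add_pow]
  simp only [mul_pow, ← C_pow, one_pow, mul_one, finset_sum_coeff, ← C_eq_natCast, mul_assoc,
    ← C_mul, coeff_C_mul, coeff_X_pow]
  rw [Finset.sum_eq_single i]
  · simp [mul_comm]
  · intro b _ hb; simp [hb.symm]
  · intro h; simp at h; simp [Nat.choose_eq_zero_of_lt h]

lemma coeff_comp_diff {R : Type*} [CommRing R] (q : R) (c : ℕ → R) (N i : ℕ) :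
    ((∑ k ∈ range (N+1), C (c k) * X^(k+1)).comp (C q * X + 1)
      - ∑ k ∈ range (N+1), C (c k) * X^(k+1)).coeff i
    = ∑ k ∈ range (N+1), c k * ((((k+1).choose i : R)) * q^i - if i = k+1 then 1 else 0) := by
  simp only [Polynomial.sum_comp, mul_comp, C_comp, pow_comp, X_comp, coeff_sub,
    finset_sum_coeff, coeff_C_mul, ← Finset.sum_sub_distrib, coeff_pow_linear, coeff_X_pow]
  refine Finset.sum_congr rfl fun k _ => ?_
  ring_nf

lemma Iq_eq (q : ℝ) (P : ℝ[X]) (N : ℕ) (hP : P.natDegree ≤ N) :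
    Iq q P = ∑ k ∈ range (N+1), C (P.coeff k * ((q-1)/(q^(k+1)-1))) * X^(k+1) := by
  rw [Iq, Polynomial.sum_over_range' _ (by simp) (N+1) (Nat.lt_succ_of_le hP)]
  refine Finset.sum_congr rfl fun k _ => ?_
  rw [div_div_eq_mul_div, mul_div_assoc]

lemma bernoulli_natDegree_le (n : ℕ) : (Polynomial.bernoulli n).natDegree ≤ n := by
  rw [Polynomial.bernoulli]
  refine Polynomial.natDegree_sum_le_of_forall_le _ _ fun i hi => ?_
  exact (Polynomial.natDegree_monomial_le _).trans (Nat.sub_le _ _)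

/-- the antiderivative of the `n`-th Bernoulli polynomial, vanishing at `0`. -/
noncomputable def Qp (n : ℕ) : ℚ[X] :=
  ∑ j ∈ range (n+1), C ((Polynomial.bernoulli n).coeff j / (j+1)) * X^(j+1)

lemma Qp_diff (n : ℕ) : (Qp n).comp (X + 1) - Qp n = X^n := by
  have hder : derivative (Qp n) = Polynomial.bernoulli n := by
    rw [Qp, derivative_sum]
    conv_rhs => rw [(Polynomial.bernoulli n).as_sum_range' (n+1)
      (Nat.lt_succ_of_le (bernoulli_natDegree_le n))]
    refine Finset.sum_congr rfl fun j hj => ?_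
    rw [derivative_C_mul, derivative_X_pow]
    have : ((j:ℚ)+1) ≠ 0 := by positivity
    push_cast
    rw [← mul_assoc, ← C_mul, div_mul_cancel₀ _ this, ← smul_X_eq_monomial, smul_eq_C_mul]
  have hc0 : (Qp n).coeff 0 = 0 := by
    rw [Qp, finset_sum_coeff]
    refine Finset.sum_eq_zero fun j _ => ?_
    rw [coeff_C_mul, coeff_X_pow]
    simp
  have hrel : Polynomial.bernoulli (n+1)
      = ((n:ℚ)+1) • Qp n + C ((Polynomial.bernoulli (n+1)).coeff 0) := by
    set D := Polynomial.bernoulli (n+1) - (((n:ℚ)+1) • Qp n + C ((Polynomial.bernoulli (n+1)).coeff 0)) with hD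
    have hderD : derivative D = 0 := by
      rw [hD]
      simp only [derivative_sub, derivative_add, derivative_smul, derivative_C, hder,
        Polynomial.derivative_bernoulli_add_one]
      rw [smul_eq_C_mul]
      simp only [C_add, C_1, C_eq_natCast]
      push_cast
      ring
    have hdeg0 : D.natDegree = 0 := Polynomial.natDegree_eq_zero_of_derivative_eq_zero hderD
    have := Polynomial.eq_C_of_natDegree_eq_zero hdeg0
    have hDc : D.coeff 0 = 0 := by
      rw [hD]
      simp [hc0, Polynomial.coeff_smul]
    rw [hDc] at this
    simp only [map_zero] at this
    have : D = 0 := this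
    rw [hD, sub_eq_zero] at this
    exact this
  have hstep : (Polynomial.bernoulli (n+1)).comp (X+1) - Polynomial.bernoulli (n+1)
      = ((n:ℚ)+1) • (X^n : ℚ[X]) := by
    apply Polynomial.funext
    intro r
    simp only [eval_sub, eval_comp, eval_add, eval_X, eval_one, eval_smul, smul_eq_mul, eval_pow]
    rw [add_comm r 1, Polynomial.bernoulli_eval_one_add]
    push_cast
    ring
  have h2 : (((n:ℚ)+1) • Qp n).comp (X+1) - ((n:ℚ)+1) • Qp n = ((n:ℚ)+1) • (X^n : ℚ[X]) := by
    have := hstep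
    rw [hrel] at this
    simpa [add_comp, C_comp, add_sub_add_right_eq_sub] using this
  have hne : ((n:ℚ)+1) ≠ 0 := by positivity
  have e : ((n:ℚ)+1) • ((Qp n).comp (X+1) - Qp n) = ((n:ℚ)+1) • (X^n : ℚ[X]) := by
    rw [smul_sub, ← smul_comp, h2]
  exact smul_right_injective ℚ[X] hne e

/-- The row identity satisfied by the Bernoulli coefficients, over `ℚ`. -/
lemma bernoulli_row (n i : ℕ) :
    ∑ j ∈ range (n+1), ((Polynomial.bernoulli n).coeff j / ((j:ℚ)+1)) *
        (((j+1).choose i : ℚ) - if i = j+1 then 1 else 0)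
      = if i = n then 1 else 0 := by
  have h := coeff_comp_diff (1:ℚ) (fun j => (Polynomial.bernoulli n).coeff j / ((j:ℚ)+1)) n i
  have harg : (C (1:ℚ) * X + 1 : ℚ[X]) = X + 1 := by simp
  rw [harg] at h
  have hQ : (∑ k ∈ range (n+1),
      C ((Polynomial.bernoulli n).coeff k / ((k:ℚ)+1)) * X^(k+1)) = Qp n := by
    rw [Qp]
  rw [hQ, Qp_diff, coeff_X_pow] at h
  simpa [one_pow] using h.symm

open Matrix

/-- `B_{n,q}(x) → B_n(x)` as `q → 1` (over `(0,∞) \ {1}`), where `B_n` is the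
classical `n`-th Bernoulli polynomial (with `B_1(x) = x − 1/2`). -/
theorem stmt_14 (n : ℕ) (x : ℝ) (B : ℝ → Polynomial ℝ)
    (hB : ∀ q : ℝ, 0 < q → q ≠ 1 →
      (Iq q (B q)).comp (Polynomial.C q * Polynomial.X + 1) - Iq q (B q)
        = Polynomial.C (q - 1) * Polynomial.X ^ (n + 1) + Polynomial.X ^ n) :
    Filter.Tendsto (fun q : ℝ => (B q).eval x)
      (nhdsWithin 1 {q : ℝ | 0 < q ∧ q ≠ 1})
      (nhds (((Polynomial.bernoulli n).map (algebraMap ℚ ℝ)).eval x)) := by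
  classical
  set l := nhdsWithin (1:ℝ) {q : ℝ | 0 < q ∧ q ≠ 1} with hl
  have hpow : ∀ q : ℝ, 0 < q → q ≠ 1 → ∀ k : ℕ, q^(k+1) - 1 ≠ 0 := by
    intro q hq0 hq1 k
    rcases lt_or_gt_of_ne hq1 with h | h
    · exact sub_ne_zero.mpr (ne_of_lt (pow_lt_one₀ hq0.le h (Nat.succ_ne_zero k)))
    · exact sub_ne_zero.mpr (ne_of_gt (one_lt_pow₀ h (Nat.succ_ne_zero k)))
  -- degree bound
  have hdeg : ∀ q : ℝ, 0 < q → q ≠ 1 → (B q).natDegree ≤ n := by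
    intro q hq0 hq1
    by_contra hlt
    push_neg at hlt
    set d := (B q).natDegree with hd
    have hBne : B q ≠ 0 := by
      intro h0
      have h := hB q hq0 hq1
      rw [h0] at h
      have hIq0 : Iq q 0 = 0 := by simp [Iq]
      rw [hIq0] at h
      have := congrArg (fun p => p.coeff n) h
      simp only [zero_comp, sub_zero, coeff_zero, coeff_add, coeff_C_mul, coeff_X_pow] at this
      norm_num at this
    have h0 := hB q hq0 hq1
    rw [Iq_eq q (B q) d le_rfl] at h0
    have h := congrArg (fun p => p.coeff (d+1)) h0
    simp only [coeff_comp_diff] at h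
    rw [Finset.sum_eq_single d] at h
    · simp only [coeff_add, coeff_C_mul, coeff_X_pow, Nat.choose_self, Nat.cast_one, one_mul,
        if_true] at h
      rw [if_neg (by omega : ¬ d + 1 = n + 1), if_neg (by omega : ¬ d + 1 = n)] at h
      simp only [mul_zero, add_zero, if_pos rfl] at h
      have hlc : (B q).coeff d ≠ 0 := by
        rw [hd]
        exact mt Polynomial.leadingCoeff_eq_zero.mp hBne
      have hne : (B q).coeff d * ((q-1)/(q^(d+1)-1)) * (q^(d+1) - 1) ≠ 0 :=
        mul_ne_zero (mul_ne_zero hlc (div_ne_zero (sub_ne_zero.mpr hq1)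
          (hpow q hq0 hq1 d))) (hpow q hq0 hq1 d)
      exact hne h
    · intro k hk hkd
      rw [Nat.choose_eq_zero_of_lt (by simp at hk; omega), if_neg (by omega)]
      simp
    · intro hd2
      simp at hd2
  -- the matrix of the linear system
  set M : ℝ → Matrix (Fin (n+1)) (Fin (n+1)) ℝ := fun q i j =>
    ((((j:ℕ)+1).choose (i:ℕ) : ℝ) * q^(i:ℕ) - if (i:ℕ) = (j:ℕ)+1 then 1 else 0)
      / (∑ t ∈ range ((j:ℕ)+1), q^t) with hM
  set v : Fin (n+1) → ℝ := fun i => if (i:ℕ) = n then 1 else 0 with hv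
  set b : Fin (n+1) → ℝ := fun j => ((Polynomial.bernoulli n).map (algebraMap ℚ ℝ)).coeff j
    with hb
  -- the coefficients of B q satisfy the linear system
  have hsys : ∀ q : ℝ, 0 < q → q ≠ 1 →
      M q *ᵥ (fun j : Fin (n+1) => (B q).coeff j) = v := by
    intro q hq0 hq1
    funext i
    have h0 := hB q hq0 hq1
    rw [Iq_eq q (B q) n (hdeg q hq0 hq1)] at h0
    have h := congrArg (fun p => p.coeff (i:ℕ)) h0
    simp only [coeff_comp_diff, coeff_add, coeff_C_mul, coeff_X_pow] at h
    rw [if_neg (by omega : ¬ (i:ℕ) = n + 1)] at h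
    simp only [mul_zero, zero_add] at h
    have hgeom : ∀ k : ℕ, (∑ t ∈ range (k+1), q^t) = (q^(k+1)-1)/(q-1) := fun k =>
      geom_sum_eq hq1 (k+1)
    show (M q *ᵥ fun j : Fin (n+1) => (B q).coeff ↑j) i = if (i:ℕ) = n then 1 else 0
    rw [← h]
    simp only [Matrix.mulVec, dotProduct, hM]
    rw [Fin.sum_univ_eq_sum_range (fun k =>
      ((((k:ℕ)+1).choose (i:ℕ) : ℝ) * q^(i:ℕ) - if (i:ℕ) = (k:ℕ)+1 then 1 else 0)
        / (∑ t ∈ range ((k:ℕ)+1), q^t) * (B q).coeff k) (n+1)]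
    refine Finset.sum_congr rfl fun k _ => ?_
    rw [hgeom k, div_div_eq_mul_div]
    have hd1 : q - 1 ≠ 0 := sub_ne_zero.mpr hq1
    have hd2 : q^(k+1) - 1 ≠ 0 := hpow q hq0 hq1 k
    field_simp
  -- entries of M 1
  have hM1 : ∀ i j : Fin (n+1), M 1 i j
      = ((((j:ℕ)+1).choose (i:ℕ) : ℝ) - if (i:ℕ) = (j:ℕ)+1 then 1 else 0) / ((j:ℕ)+1) := by
    intro i j
    simp [hM]
  -- M 1 is upper triangular with unit diagonal
  have hdet1 : (M 1).det = 1 := by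
    rw [Matrix.det_of_upperTriangular]
    · refine Finset.prod_eq_one fun i _ => ?_
      rw [hM1, if_neg (by omega), Nat.choose_succ_self_right, sub_zero]
      push_cast
      rw [div_self (by positivity)]
    · intro i j hij
      rw [hM1]
      rcases eq_or_ne ((i:ℕ)) ((j:ℕ)+1) with h | h
      · rw [if_pos h, h, Nat.choose_self]
        simp
      · rw [if_neg h, Nat.choose_eq_zero_of_lt (by simp at hij; omega)]
        simp
  -- the Bernoulli coefficients satisfy the limiting system
  have hM1b : M 1 *ᵥ b = v := by
    funext i
    have hq := bernoulli_row n i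
    have hr := congrArg (algebraMap ℚ ℝ) hq
    simp only [map_sum, _root_.map_mul, map_div₀, map_sub, map_natCast, map_add, _root_.map_one,
      map_zero, apply_ite (algebraMap ℚ ℝ)] at hr
    simp only [Matrix.mulVec, dotProduct, hv]
    calc ∑ j : Fin (n+1), M 1 i j * b j
        = ∑ k ∈ range (n+1), ((((k:ℕ)+1).choose (i:ℕ) : ℝ)
              - if (i:ℕ) = k+1 then 1 else 0) / ((k:ℕ)+1)
            * ((Polynomial.bernoulli n).map (algebraMap ℚ ℝ)).coeff k := by
          rw [← Fin.sum_univ_eq_sum_range (fun k => ((((k:ℕ)+1).choose (i:ℕ) : ℝ)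
              - if (i:ℕ) = k+1 then 1 else 0) / ((k:ℕ)+1)
            * ((Polynomial.bernoulli n).map (algebraMap ℚ ℝ)).coeff k) (n+1)]
          exact Finset.sum_congr rfl fun j _ => by rw [hM1, hb]
      _ = ∑ j ∈ range (n+1), ((algebraMap ℚ ℝ) ((Polynomial.bernoulli n).coeff j) / ((j:ℝ)+1))
            * (((j+1).choose (i:ℕ) : ℝ) - if (i:ℕ) = j+1 then 1 else 0) := by
          refine Finset.sum_congr rfl fun k _ => ?_
          rw [Polynomial.coeff_map]
          push_cast
          ring
      _ = if (i:ℕ) = n then 1 else 0 := by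
          rw [← hr]
  -- continuity of M
  have hMt : Filter.Tendsto M l (nhds (M 1)) := by
    refine Filter.Tendsto.mono_left ?_ nhdsWithin_le_nhds
    refine tendsto_pi_nhds.mpr fun i => tendsto_pi_nhds.mpr fun j => ?_
    have hnum : Continuous fun q : ℝ =>
        ((((j:ℕ)+1).choose (i:ℕ) : ℝ) * q^(i:ℕ) - if (i:ℕ) = (j:ℕ)+1 then 1 else 0) := by
      continuity
    have hden : Continuous fun q : ℝ => ∑ t ∈ range ((j:ℕ)+1), q^t := by
      exact continuous_finset_sum _ fun t _ => continuous_pow t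
    have hden1 : (∑ t ∈ range ((j:ℕ)+1), (1:ℝ)^t) ≠ 0 := by
      simp only [one_pow, Finset.sum_const, card_range, nsmul_eq_mul, mul_one]
      positivity
    exact (hnum.continuousAt.div hden.continuousAt hden1).tendsto
  have hdetT : Filter.Tendsto (fun q => (M q).det) l (nhds 1) := by
    have := (Continuous.matrix_det continuous_id).continuousAt (x := M 1)
    have h2 := this.tendsto.comp hMt
    simpa [Function.comp_def, hdet1] using h2
  have hadjT : ∀ j : Fin (n+1), Filter.Tendsto (fun q => ((M q).adjugate *ᵥ v) j) l
      (nhds (((M 1).adjugate *ᵥ v) j)) := by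
    intro j
    have hc : Continuous fun A : Matrix (Fin (n+1)) (Fin (n+1)) ℝ => (A.adjugate *ᵥ v) j :=
      (continuous_apply j).comp ((Continuous.matrix_adjugate continuous_id).matrix_mulVec
        continuous_const)
    exact (hc.continuousAt.tendsto).comp hMt
  -- the limit of the adjugate expression is b
  have hadjb : (M 1).adjugate *ᵥ v = b := by
    rw [← hM1b, Matrix.mulVec_mulVec, Matrix.adjugate_mul, hdet1, one_smul, Matrix.one_mulVec]
  -- coefficientwise convergence
  have hcoef : ∀ j : Fin (n+1),
      Filter.Tendsto (fun q => (B q).coeff (j:ℕ)) l (nhds (b j)) := by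
    intro j
    have hev : ∀ᶠ q in l, ((M q).adjugate *ᵥ v) j / (M q).det = (B q).coeff (j:ℕ) := by
      filter_upwards [hdetT.eventually_ne one_ne_zero, self_mem_nhdsWithin] with q hqd hqS
      obtain ⟨hq0, hq1⟩ := hqS
      have h1 : (M q).adjugate *ᵥ v = (M q).det • (fun j : Fin (n+1) => (B q).coeff (j:ℕ)) := by
        rw [← hsys q hq0 hq1, Matrix.mulVec_mulVec, Matrix.adjugate_mul,
          Matrix.smul_mulVec, Matrix.one_mulVec]
      have h2 := congrFun h1 j
      simp only [Pi.smul_apply, smul_eq_mul] at h2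
      rw [h2]
      field_simp
    refine Filter.Tendsto.congr' hev ?_
    have := (hadjT j).div hdetT one_ne_zero
    simpa [hadjb, Pi.div_def] using this
  -- conclude
  have hndb : ((Polynomial.bernoulli n).map (algebraMap ℚ ℝ)).natDegree ≤ n :=
    Polynomial.natDegree_map_le.trans (bernoulli_natDegree_le n)
  have hevalb : ((Polynomial.bernoulli n).map (algebraMap ℚ ℝ)).eval x
      = ∑ j : Fin (n+1), b j * x^(j:ℕ) := by
    rw [Polynomial.eval_eq_sum_range' (Nat.lt_succ_of_le hndb), ← Fin.sum_univ_eq_sum_range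
      (fun j => ((Polynomial.bernoulli n).map (algebraMap ℚ ℝ)).coeff j * x^j) (n+1)]
  rw [hevalb]
  have hT : Filter.Tendsto (fun q => ∑ j : Fin (n+1), (B q).coeff (j:ℕ) * x^(j:ℕ)) l
      (nhds (∑ j : Fin (n+1), b j * x^(j:ℕ))) :=
    tendsto_finset_sum _ fun j _ => (hcoef j).mul_const _
  refine hT.congr' ?_
  filter_upwards [self_mem_nhdsWithin] with q hqS
  obtain ⟨hq0, hq1⟩ := hqS
  rw [Polynomial.eval_eq_sum_range' (Nat.lt_succ_of_le (hdeg q hq0 hq1)),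
    ← Fin.sum_univ_eq_sum_range (fun j => (B q).coeff j * x^j) (n+1)]
end
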